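/- arXiv:2112.07539 — 6 statements merged into one kernel-verified Lean document; each statement's English description precedes it below -/
import Mathlib

section
/- A finite undirected graph has a strongly connected orientation if and only if it is connected and 2-edge-connected (i.e., has no bridge). -/
open Relation

/-- `D` is an orientation of the simple graph `G`: every arc is along an edge,
and every edge gets exactly one direction. -/
def IsOrientation {V : Type*} (G : SimpleGraph V) (D : V → V → Prop) : Prop :=
  (∀ a b, D a b → G.Adj a b) ∧ ∀ a b, G.Adj a b → (D a b ↔ ¬ D b a)

/-- The digraph given by the relation `D` is strongly connected. -/
def StrongConn {V : Type*} (D : V → V → Prop) : Prop :=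
  ∀ a b : V, ReflTransGen D a b

/-- `D - v` is strongly connected. -/
def StrongAvoid {V : Type*} (D : V → V → Prop) (v : V) : Prop :=
  ∀ a b : V, a ≠ v → b ≠ v →
    ReflTransGen (fun x y => D x y ∧ x ≠ v ∧ y ≠ v) a b

/-- `G` is `k`-edge-connected: every nonempty proper vertex set has at least
`k` boundary edges (each crossing edge counted once, ordered with first endpoint inside). -/
def EdgeConn {V : Type*} (G : SimpleGraph V) (k : ℕ) : Prop :=
  ∀ X : Set V, X.Nonempty → X ≠ Set.univ →
    k ≤ Nat.card {p : V × V // p.1 ∈ X ∧ p.2 ∉ X ∧ G.Adj p.1 p.2}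

/-- The digraph `D` is `k`-arc-connected: every nonempty proper vertex set has
at least `k` entering arcs. -/
def ArcConn {V : Type*} (D : V → V → Prop) (k : ℕ) : Prop :=
  ∀ X : Set V, X.Nonempty → X ≠ Set.univ →
    k ≤ Nat.card {p : V × V // D p.1 p.2 ∧ p.1 ∉ X ∧ p.2 ∈ X}

/-- `D` is 2-vertex-connected: at least 3 vertices, strongly connected, and
strongly connected after deleting any vertex. -/
def TwoVC {V : Type*} (D : V → V → Prop) : Prop :=
  3 ≤ Nat.card V ∧ StrongConn D ∧ ∀ v : V, StrongAvoid D v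

namespace RobbinsAux

variable {V : Type*}

/-- crossing lemma for ReflTransGen -/
lemma cross_exists {R : V → V → Prop} {X : Set V} {a b : V}
    (h : ReflTransGen R a b) (ha : a ∈ X) (hb : b ∉ X) :
    ∃ u v, u ∈ X ∧ v ∉ X ∧ R u v := by
  induction h with
  | refl => exact absurd ha hb
  | @tail b' c h1 h2 ih =>
    by_cases hb' : b' ∈ X
    · exact ⟨b', c, hb', hb, h2⟩
    · exact ih hb'

/-- partial good orientation -/
def Good (G : SimpleGraph V) (S : Set V) (D : V → V → Prop) : Prop :=
  (∀ a b, D a b → G.Adj a b ∧ a ∈ S ∧ b ∈ S) ∧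
  (∀ a b, ¬ (D a b ∧ D b a)) ∧
  (∀ a b, a ∈ S → b ∈ S → ReflTransGen D a b)

variable {G : SimpleGraph V}

lemma dart_fst_ne_last {u t : V} {w : G.Walk u t} (hw : w.IsPath) {d : G.Dart}
    (hd : d ∈ w.darts) : d.fst ≠ t := by
  induction w with
  | nil => simp at hd
  | @cons a b c h p ih =>
    rw [SimpleGraph.Walk.darts_cons] at hd
    rcases List.mem_cons.1 hd with rfl | hd
    · intro hat
      have : a ∈ p.support := hat ▸ p.end_mem_support
      exact ((SimpleGraph.Walk.cons_isPath_iff _ _).1 hw).2 this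
    · exact ih ((SimpleGraph.Walk.cons_isPath_iff _ _).1 hw).1 hd

lemma reach_to_end {A : V → V → Prop} {u t : V} (w : G.Walk u t)
    (hA : ∀ d ∈ w.darts, A d.fst d.snd) : ∀ x ∈ w.support, ReflTransGen A x t := by
  induction w with
  | nil => intro x hx; simp at hx; subst hx; exact ReflTransGen.refl
  | @cons a b c h p ih =>
    have hA' : ∀ d ∈ p.darts, A d.fst d.snd := fun d hd => hA d (by
      rw [SimpleGraph.Walk.darts_cons]; exact List.mem_cons_of_mem _ hd)
    intro x hx
    rw [SimpleGraph.Walk.support_cons] at hx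
    rcases List.mem_cons.1 hx with rfl | hx
    · have h1 : A x b := hA ⟨(x, b), h⟩ (by
        rw [SimpleGraph.Walk.darts_cons]; exact List.mem_cons_self)
      exact ReflTransGen.head h1 (ih hA' b p.start_mem_support)
    · exact ih hA' x hx

lemma reach_from_start {A : V → V → Prop} {u t : V} (w : G.Walk u t)
    (hA : ∀ d ∈ w.darts, A d.fst d.snd) : ∀ x ∈ w.support, ReflTransGen A u x := by
  induction w with
  | nil => intro x hx; simp at hx; subst hx; exact ReflTransGen.refl
  | @cons a b c h p ih =>
    have hA' : ∀ d ∈ p.darts, A d.fst d.snd := fun d hd => hA d (by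
      rw [SimpleGraph.Walk.darts_cons]; exact List.mem_cons_of_mem _ hd)
    have h1 : A a b := hA ⟨(a, b), h⟩ (by
      rw [SimpleGraph.Walk.darts_cons]; exact List.mem_cons_self)
    intro x hx
    rw [SimpleGraph.Walk.support_cons] at hx
    rcases List.mem_cons.1 hx with rfl | hx
    · exact ReflTransGen.refl
    · exact ReflTransGen.head h1 (ih hA' x hx)


lemma extend {S : Set V} {D : V → V → Prop} {s u t : V}
    (hD : Good G S D) (hs : s ∈ S) (hu : u ∉ S) (hsu : G.Adj s u)
    (w : G.Walk u t) (hw : w.IsPath) (ht : t ∈ S)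
    (hsupp : ∀ x ∈ w.support, x = t ∨ x ∉ S)
    (he : s(s, u) ∉ w.edges) :
    ∃ D', Good G (S ∪ {x | x ∈ w.support}) D' := by
  obtain ⟨hD1, hD2, hD3⟩ := hD
  set A : V → V → Prop :=
    fun x y => D x y ∨ (x = s ∧ y = u) ∨ ∃ d ∈ w.darts, d.toProd = (x, y) with hA
  have hdartA : ∀ d ∈ w.darts, A d.fst d.snd :=
    fun d hd => Or.inr (Or.inr ⟨d, hd, rfl⟩)
  have hfstS : ∀ d ∈ w.darts, d.fst ∉ S := by
    intro d hd
    rcases hsupp d.fst (w.dart_fst_mem_support_of_mem_darts hd) with h1 | h1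
    · exact absurd h1 (dart_fst_ne_last hw hd)
    · exact h1
  have hproj : ∀ (d : G.Dart) (a b : V), d.toProd = (a, b) → d.toProd.1 = a ∧ d.toProd.2 = b := by
    intro d a b hdp; rw [hdp]; exact ⟨rfl, rfl⟩
  have hAadj : ∀ a b, A a b → G.Adj a b ∧ (a ∈ S ∪ {x | x ∈ w.support}) ∧
      (b ∈ S ∪ {x | x ∈ w.support}) := by
    rintro a b (h | ⟨ha, hb⟩ | ⟨d, hd, hdp⟩)
    · obtain ⟨h1, h2, h3⟩ := hD1 a b h
      exact ⟨h1, Or.inl h2, Or.inl h3⟩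
    · subst ha; subst hb
      exact ⟨hsu, Or.inl hs, Or.inr w.start_mem_support⟩
    · obtain ⟨hfa, hfb⟩ := hproj d a b hdp
      subst hfa; subst hfb
      exact ⟨d.adj, Or.inr (w.dart_fst_mem_support_of_mem_darts hd),
        Or.inr (w.dart_snd_mem_support_of_mem_darts hd)⟩
  refine ⟨A, hAadj, ?_, ?_⟩
  · rintro a b ⟨(h1 | ⟨ha1, hb1⟩ | ⟨d, hd, hdp⟩), (h2 | ⟨hb2, ha2⟩ | ⟨d', hd', hdp'⟩)⟩
    · exact hD2 a b ⟨h1, h2⟩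
    · -- D a b with (b,a) = (s,u): a ∉ S
      subst ha2; exact hu (hD1 _ _ h1).2.1
    · -- D a b and dart (b,a): b = d'.fst ∉ S but D a b means b ∈ S
      obtain ⟨hfb, -⟩ := hproj d' b a hdp'
      exact (hfb ▸ hfstS d' hd') (hD1 a b h1).2.2
    · exact hu (hb1 ▸ (hD1 b a h2).2.1)
    · -- (s,u) both ways
      exact G.ne_of_adj hsu (ha1.symm.trans ha2)
    · -- arc (s,u) and dart (u,s)
      apply he
      have hde : d'.edge = s(s, u) := by
        rw [SimpleGraph.Dart.edge, hdp', ← ha1, ← hb1, Sym2.eq_swap]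
      exact hde ▸ List.mem_map_of_mem (f := SimpleGraph.Dart.edge) hd'
    · obtain ⟨hfa, -⟩ := hproj d a b hdp
      exact (hfa ▸ hfstS d hd) (hD1 b a h2).2.2
    · apply he
      have hde : d.edge = s(s, u) := by
        rw [SimpleGraph.Dart.edge, hdp, ← hb2, ← ha2, Sym2.eq_swap]
      exact hde ▸ List.mem_map_of_mem (f := SimpleGraph.Dart.edge) hd
    · have hedge : d.edge = d'.edge := by
        rw [SimpleGraph.Dart.edge, SimpleGraph.Dart.edge, hdp, hdp', Sym2.eq_swap]
      have hdd : d = d' := by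
        have hnd : (w.darts.map SimpleGraph.Dart.edge).Nodup := hw.isTrail.edges_nodup
        exact List.inj_on_of_nodup_map hnd hd hd' hedge
      subst hdd
      have hab : a = b := congrArg Prod.fst (hdp.symm.trans hdp')
      have hadj : G.Adj a b := (hAadj a b (Or.inr (Or.inr ⟨d, hd, hdp⟩))).1
      exact G.ne_of_adj hadj hab
  · -- strong connectivity
    have hmono : ∀ x y, D x y → A x y := fun x y h => Or.inl h
    have hDA : ∀ {x y}, x ∈ S → y ∈ S → ReflTransGen A x y :=
      fun hx hy => ReflTransGen.mono hmono _ _ (hD3 _ _ hx hy)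
    have hSU : ∀ x ∈ w.support, ReflTransGen A s x :=
      fun x hx => ReflTransGen.head (Or.inr (Or.inl ⟨rfl, rfl⟩))
        (reach_from_start w hdartA x hx)
    have hUT : ∀ x ∈ w.support, ReflTransGen A x t := reach_to_end w hdartA
    rintro a b (ha | ha) (hb | hb)
    · exact hDA ha hb
    · exact (hDA ha hs).trans (hSU b hb)
    · exact (hUT a ha).trans (hDA ht hb)
    · exact ((hUT a ha).trans (hDA ht hs)).trans (hSU b hb)


/-- truncate a walk at its first vertex in S -/
lemma first_hit {S : Set V} : ∀ {u t : V} (w : G.Walk u t), u ∉ S → t ∈ S →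
    ∃ t₀ ∈ S, ∃ w₀ : G.Walk u t₀,
      (∀ x ∈ w₀.support, x = t₀ ∨ x ∉ S) ∧ w₀.edges ⊆ w.edges := by
  intro u t w
  induction w with
  | nil => intro hu ht; exact absurd ht hu
  | @cons a b c h p ih =>
    intro hu ht
    by_cases hb : b ∈ S
    · refine ⟨b, hb, SimpleGraph.Walk.cons h SimpleGraph.Walk.nil, ?_, ?_⟩
      · intro x hx
        simp only [SimpleGraph.Walk.support_cons, SimpleGraph.Walk.support_nil,
          List.mem_cons, List.mem_singleton] at hx
        rcases hx with rfl | rfl | h'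
        · exact Or.inr hu
        · exact Or.inl rfl
        · exact absurd h' List.not_mem_nil
      · intro e heq
        simp only [SimpleGraph.Walk.edges_cons, SimpleGraph.Walk.edges_nil,
          List.mem_cons, List.not_mem_nil, or_false] at heq
        rw [SimpleGraph.Walk.edges_cons]
        exact heq ▸ List.mem_cons_self
    · obtain ⟨t₀, ht₀, w₀, hsupp, hedges⟩ := ih hb ht
      refine ⟨t₀, ht₀, SimpleGraph.Walk.cons h w₀, ?_, ?_⟩
      · intro x hx
        rw [SimpleGraph.Walk.support_cons] at hx
        rcases List.mem_cons.1 hx with rfl | hx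
        · exact Or.inr hu
        · exact hsupp x hx
      · intro e heq
        rw [SimpleGraph.Walk.edges_cons] at heq ⊢
        rcases List.mem_cons.1 heq with rfl | heq
        · exact List.mem_cons_self
        · exact List.mem_cons_of_mem _ (hedges heq)

/-- existence of an ear: for s ∈ S adjacent to u ∉ S, find a walk from u back to S
avoiding the edge su -/
lemma ear_exists [Fintype V] (h2 : EdgeConn G 2) {S : Set V} {s u : V}
    (hs : s ∈ S) (hu : u ∉ S) (hsu : G.Adj s u) :
    ∃ t ∈ S, ∃ w : G.Walk u t, w.IsPath ∧
      (∀ x ∈ w.support, x = t ∨ x ∉ S) ∧ s(s, u) ∉ w.edges := by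
  classical
  set G' : SimpleGraph V := G.deleteEdges {s(s, u)} with hG'
  -- first: exists t ∈ S reachable from u in G'
  have hreach : ∃ t ∈ S, G'.Reachable u t := by
    by_contra hcon
    push_neg at hcon
    set T : Set V := {x | G'.Reachable u x} with hT
    have huT : u ∈ T := Set.mem_setOf_eq ▸ SimpleGraph.Reachable.refl u
    have hsT : s ∉ T := fun h => hcon s hs h
    have hTne : T.Nonempty := ⟨u, huT⟩
    have hTuniv : T ≠ Set.univ := fun h => hsT (h ▸ Set.mem_univ s)
    have hcard := h2 T hTne hTuniv
    have hsub : Subsingleton {p : V × V // p.1 ∈ T ∧ p.2 ∉ T ∧ G.Adj p.1 p.2} := by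
      constructor
      have key : ∀ p : {p : V × V // p.1 ∈ T ∧ p.2 ∉ T ∧ G.Adj p.1 p.2},
          p.1 = (u, s) := by
        rintro ⟨⟨a, b⟩, haT, hbT, hab⟩
        by_cases hedge : s(a, b) = s(s, u)
        · rcases Sym2.eq_iff.1 hedge with ⟨rfl, rfl⟩ | ⟨rfl, rfl⟩
          · exact absurd haT hsT
          · rfl
        · have hG'adj : G'.Adj a b := by
            rw [hG', SimpleGraph.deleteEdges_adj]
            exact ⟨hab, by simpa using hedge⟩
          exact absurd ((haT : G'.Reachable u a).trans hG'adj.reachable) hbT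
      intro p q
      exact Subtype.ext ((key p).trans (key q).symm)
    have : Nat.card {p : V × V // p.1 ∈ T ∧ p.2 ∉ T ∧ G.Adj p.1 p.2} ≤ 1 := by
      rcases isEmpty_or_nonempty {p : V × V // p.1 ∈ T ∧ p.2 ∉ T ∧ G.Adj p.1 p.2} with h | h
      · simp [Nat.card_of_isEmpty]
      · exact le_of_eq (Nat.card_eq_one_iff_unique.2 ⟨hsub, h⟩)
    omega
  obtain ⟨t1, ht1, hre⟩ := hreach
  obtain ⟨w1⟩ := hre
  -- truncate at first hit of S
  obtain ⟨t₀, ht₀, w₀, hsupp₀, -⟩ := first_hit (S := S) w1 hu ht1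
  -- make it a path
  set wp := w₀.bypass with hwp
  have hpath : wp.IsPath := SimpleGraph.Walk.bypass_isPath w₀
  have hsuppP : ∀ x ∈ wp.support, x = t₀ ∨ x ∉ S := fun x hx =>
    hsupp₀ x (SimpleGraph.Walk.support_bypass_subset w₀ hx)
  -- transfer to G
  have hle : G' ≤ G := SimpleGraph.deleteEdges_le _
  have hsubE : ∀ e ∈ wp.edges, e ∈ G.edgeSet := fun e heq =>
    SimpleGraph.edgeSet_mono hle (wp.edges_subset_edgeSet heq)
  refine ⟨t₀, ht₀, wp.transfer G hsubE, ?_, ?_, ?_⟩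
  · rw [SimpleGraph.Walk.isPath_def, SimpleGraph.Walk.support_transfer]
    exact hpath.support_nodup
  · rw [SimpleGraph.Walk.support_transfer]
    exact hsuppP
  · rw [SimpleGraph.Walk.edges_transfer]
    intro hmem
    have : s(s, u) ∈ G'.edgeSet := wp.edges_subset_edgeSet hmem
    rw [hG', SimpleGraph.edgeSet_deleteEdges] at this
    simp at this


lemma grow [Fintype V] (hconn : G.Connected) (h2 : EdgeConn G 2) :
    ∀ (n : ℕ) (S : Set V) (D : V → V → Prop), Good G S D → S.Nonempty →
      Sᶜ.ncard ≤ n → ∃ D', Good G (Set.univ : Set V) D' := by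
  have step : ∀ (S : Set V) (D : V → V → Prop), Good G S D → S.Nonempty →
      S ≠ Set.univ → ∃ (S' : Set V) (D' : V → V → Prop),
        Good G S' D' ∧ S ⊆ S' ∧ S'ᶜ.ncard < Sᶜ.ncard := by
    intro S D hD hne huniv
    obtain ⟨x, hx⟩ := hne
    obtain ⟨y, hy⟩ : ∃ y, y ∉ S := by
      by_contra hcon
      push_neg at hcon
      exact huniv (Set.eq_univ_of_forall hcon)
    have hreach : ReflTransGen G.Adj x y :=
      (SimpleGraph.reachable_iff_reflTransGen _ _).1 (hconn.preconnected x y)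
    obtain ⟨s, u, hs, hu, hsu⟩ := cross_exists hreach hx hy
    obtain ⟨t, ht, w, hw, hsupp, he⟩ := ear_exists h2 hs hu hsu
    obtain ⟨D', hD'⟩ := extend hD hs hu hsu w hw ht hsupp he
    refine ⟨S ∪ {x | x ∈ w.support}, D', hD', Set.subset_union_left, ?_⟩
    apply Set.ncard_lt_ncard _ (Set.toFinite _)
    constructor
    · exact Set.compl_subset_compl.2 Set.subset_union_left
    · intro hsub
      exact (hsub (fun h => hu h : u ∈ Sᶜ)) (Or.inr w.start_mem_support)
  intro n
  induction n with
  | zero =>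
    intro S D hD hne hcard
    by_cases huniv : S = Set.univ
    · exact ⟨D, huniv ▸ hD⟩
    · obtain ⟨S', D', hD', hss, hlt⟩ := step S D hD hne huniv
      omega
  | succ n ih =>
    intro S D hD hne hcard
    by_cases huniv : S = Set.univ
    · exact ⟨D, huniv ▸ hD⟩
    · obtain ⟨S', D', hD', hss, hlt⟩ := step S D hD hne huniv
      exact ih S' D' hD' (hne.mono hss) (by omega)

end RobbinsAux

open RobbinsAux

/-- Robbins' theorem: a finite graph has a strongly connected orientation iff
it is connected and 2-edge-connected. -/
theorem stmt_0 {V : Type*} [Fintype V] [Nonempty V] (G : SimpleGraph V) :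
    (∃ D : V → V → Prop, IsOrientation G D ∧ StrongConn D) ↔
      G.Connected ∧ EdgeConn G 2 := by
  classical
  constructor
  · rintro ⟨D, ⟨hD1, hD2⟩, hsc⟩
    constructor
    · rw [SimpleGraph.connected_iff]
      refine ⟨fun a b => ?_, ‹Nonempty V›⟩
      rw [SimpleGraph.reachable_iff_reflTransGen]
      exact ReflTransGen.mono hD1 _ _ (hsc a b)
    · intro X hne huniv
      obtain ⟨x, hx⟩ := hne
      obtain ⟨y, hy⟩ : ∃ y, y ∉ X := by
        by_contra hcon
        push_neg at hcon
        exact huniv (Set.eq_univ_of_forall hcon)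
      obtain ⟨p, q, hp, hq, hpq⟩ := cross_exists (hsc x y) hx hy
      obtain ⟨p', q', hp', hq', hpq'⟩ :=
        cross_exists (X := Xᶜ) (hsc y x) hy (by simpa using hx)
      rw [Set.mem_compl_iff] at hp'
      have hq'X : q' ∈ X := by simpa using hq'
      have h1 : (⟨(p, q), hp, hq, hD1 _ _ hpq⟩ :
          {r : V × V // r.1 ∈ X ∧ r.2 ∉ X ∧ G.Adj r.1 r.2}) ≠
          ⟨(q', p'), hq'X, hp', (hD1 _ _ hpq').symm⟩ := by
        intro hcontra
        have h2 : p = q' ∧ q = p' := by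
          have := congrArg Subtype.val hcontra
          exact ⟨congrArg Prod.fst this, congrArg Prod.snd this⟩
        obtain ⟨rfl, rfl⟩ := h2
        exact ((hD2 _ _ (hD1 _ _ hpq)).1 hpq) hpq'
      have : Nontrivial {r : V × V // r.1 ∈ X ∧ r.2 ∉ X ∧ G.Adj r.1 r.2} :=
        ⟨_, _, h1⟩
      exact Finite.one_lt_card_iff_nontrivial.2 this
  · rintro ⟨hconn, h2⟩
    obtain ⟨v⟩ := ‹Nonempty V›
    have hbase : Good G {v} (fun _ _ => False) := by
      refine ⟨fun a b h => h.elim, fun a b h => h.1, fun a b ha hb => ?_⟩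
      rw [Set.mem_singleton_iff] at ha hb
      subst ha; subst hb
      exact ReflTransGen.refl
    obtain ⟨D₀, hD₀1, hD₀2, hD₀3⟩ :=
      grow hconn h2 (({v} : Set V)ᶜ.ncard) {v} _ hbase ⟨v, rfl⟩ le_rfl
    -- complete the orientation using a linear order from Fintype
    set e := Fintype.equivFin V with he
    set D : V → V → Prop :=
      fun x y => D₀ x y ∨ (G.Adj x y ∧ ¬ D₀ x y ∧ ¬ D₀ y x ∧ e x < e y) with hD
    refine ⟨D, ⟨?_, ?_⟩, ?_⟩
    · rintro a b (h | ⟨h, -⟩)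
      · exact (hD₀1 a b h).1
      · exact h
    · intro a b hab
      by_cases h1 : D₀ a b
      · constructor
        · rintro - (h2' | ⟨-, -, h3, -⟩)
          · exact hD₀2 a b ⟨h1, h2'⟩
          · exact h3 h1
        · intro _; exact Or.inl h1
      · by_cases h2' : D₀ b a
        · constructor
          · rintro (h3 | ⟨-, -, h3, -⟩) -
            · exact h1 h3
            · exact h3 h2'
          · intro hn
            exact absurd (Or.inl h2') hn
        · have hne : e a ≠ e b := fun hcon =>
            G.ne_of_adj hab (e.injective hcon)
          constructor
          · rintro (h3 | ⟨-, -, -, h3⟩) (h4 | ⟨-, -, -, h4⟩)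
            · exact h1 h3
            · exact h1 h3
            · exact h2' h4
            · exact absurd h3 (not_lt.2 h4.le)
          · intro hn
            refine Or.inr ⟨hab, h1, h2', ?_⟩
            rcases lt_or_gt_of_ne hne with h | h
            · exact h
            · exact absurd (Or.inr ⟨hab.symm, h2', h1, h⟩) hn
    · intro a b
      exact ReflTransGen.mono (fun x y h => Or.inl h) _ _
        (hD₀3 a b (Set.mem_univ a) (Set.mem_univ b))
end

section
/- A finite graph G has a 2-arc-connected orientation if and only if G is 4-edge-connected. -/
/-!
Necessity: the at least two arcs entering `X` and the at least two arcs leaving `X` lie on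
distinct edges of the cut of `X`.

Sufficiency is Lovász's proof of the weak orientation theorem for multigraphs (`2K`-edge-connected
implies a `K`-arc-connected orientation), by induction on the number of vertices and then of edges.
If some edge can be deleted without destroying `2K`-edge-connectivity, orient the rest and add that
edge in either direction. Otherwise every edge crosses a tight cut, and uncrossing a minimal tight
set shows that some vertex `s` has degree exactly `2K` (Mader). Lovász's splitting lemma then lets
us replace pairs of edges `su`, `sv` by `uv`, `K` times, so that every cut separating two vertices
other than `s` keeps at least `2K` edges. Once `s` is isolated, delete it and orient by induction;
routing every new arc `u → v` back through `s` as `u → s → v` never decreases an indegree and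
gives `s` indegree and outdegree `K`.
-/

open Relation

namespace NashWilliams

open Finset

variable {V : Type*}

/-- A multigraph on `V` is an edge multiplicity `m : Sym2 V → ℕ`, an orientation of it an arc
multiplicity `o : V × V → ℕ`. Loops are allowed (splitting off `su, su` creates one); they never
cross a cut and are not oriented. -/
def Orients (m : Sym2 V → ℕ) (o : V × V → ℕ) : Prop :=
  ∀ x y, x ≠ y → o (x, y) + o (y, x) = m s(x, y)

def edgesBetween (m : Sym2 V → ℕ) (A B : Finset V) : ℕ := ∑ p ∈ A ×ˢ B, m s(p.1, p.2)

lemma edgesBetween_comm (m : Sym2 V → ℕ) (A B : Finset V) :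
    edgesBetween m A B = edgesBetween m B A := by
  simp only [edgesBetween, sum_product]
  rw [sum_comm]
  simp only [Sym2.eq_swap]

lemma edgesBetween_singleton_left (m : Sym2 V → ℕ) (a : V) (B : Finset V) :
    edgesBetween m {a} B = ∑ b ∈ B, m s(a, b) := by
  simp [edgesBetween, singleton_product]

lemma eq_zero_of_edgesBetween_le_one {m : Sym2 V → ℕ} {P Q : Finset V}
    (h : edgesBetween m P Q ≤ 1) {p q : V × V} (hp : p ∈ P ×ˢ Q) (hq : q ∈ P ×ˢ Q) (hpq : p ≠ q)
    (hq₀ : 0 < m s(q.1, q.2)) : m s(p.1, p.2) = 0 := by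
  have := add_le_sum (f := fun p : V × V => m s(p.1, p.2)) (fun _ _ => Nat.zero_le _) hp hq hpq
  rw [edgesBetween] at h
  omega

lemma exists_eq_add_single {α : Type*} [DecidableEq α] {f : α → ℕ} {a : α} (h : 0 < f a) :
    ∃ g : α → ℕ, f = g + Pi.single a 1 :=
  ⟨f - Pi.single a (1 : ℕ), by ext x; rcases eq_or_ne x a with rfl | hx <;> simp [*]; omega⟩

section

variable [DecidableEq V]

lemma orients_add_single_iff {m : Sym2 V → ℕ} {o : V × V → ℕ} {a b : V} :
    Orients (m + Pi.single s(a, b) 1) (o + Pi.single (a, b) 1) ↔ Orients m o := by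
  refine forall₂_congr fun x y => imp_congr_right fun hxy => ?_
  simp only [Pi.add_apply, Pi.single_apply, Sym2.eq_iff, Prod.mk.injEq]
  split_ifs <;> grind

lemma sum_product_subtype_ne {s : V} (A B : Finset V) (f : V × V → ℕ)
    (hf : ∀ a ∈ A, ∀ b ∈ B, (a = s ∨ b = s) → f (a, b) = 0) :
    ∑ q ∈ A.subtype (· ≠ s) ×ˢ B.subtype (· ≠ s), f (q.1, q.2) = ∑ q ∈ A ×ˢ B, f q := by
  simp only [sum_product]
  rw [sum_subtype_eq_sum_filter (fun a => ∑ y ∈ B.subtype (· ≠ s), f (a, y)),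
    sum_filter_of_ne]
  · refine sum_congr rfl fun a ha => ?_
    rw [sum_subtype_eq_sum_filter (fun b => f (a, b)), sum_filter_of_ne]
    exact fun b hb hne hbs => hne (hf a ha b hb (.inr hbs))
  · intro a ha hne has
    refine hne (sum_eq_zero fun b hb => hf a ha b ?_ (.inl has))
    simpa using hb

end

variable [Fintype V] [DecidableEq V]

def cut (m : Sym2 V → ℕ) (X : Finset V) : ℕ := edgesBetween m X Xᶜ

def indeg (o : V × V → ℕ) (X : Finset V) : ℕ := ∑ p ∈ Xᶜ ×ˢ X, o p

def IsCut (X : Finset V) : Prop := X.Nonempty ∧ Xᶜ.Nonempty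

/-- `X` separates two vertices of `V - s`, i.e. `∅ ≠ X - s ≠ V - s`. -/
def IsCutAway (s : V) (X : Finset V) : Prop := (X.erase s).Nonempty ∧ (Xᶜ.erase s).Nonempty

section Cuts

variable {m : Sym2 V → ℕ} {X : Finset V} {s : V}

lemma IsCut.compl (h : IsCut X) : IsCut Xᶜ := by
  rw [IsCut, compl_compl]
  exact h.symm

lemma IsCutAway.compl (h : IsCutAway s X) : IsCutAway s Xᶜ := by
  rw [IsCutAway, compl_compl]
  exact h.symm

lemma isCut_singleton [Nontrivial V] (v : V) : IsCut {v} := by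
  obtain ⟨w, hw⟩ := exists_ne v
  exact ⟨singleton_nonempty v, w, by simpa using hw⟩

lemma IsCutAway.isCut (h : IsCutAway s X) : IsCut X :=
  ⟨h.1.mono (erase_subset _ _), h.2.mono (erase_subset _ _)⟩

lemma IsCut.isCutAway_or_eq (hX : IsCut X) (s : V) : IsCutAway s X ∨ X = {s} ∨ X = {s}ᶜ := by
  by_cases h₁ : (X.erase s).Nonempty
  · by_cases h₂ : (Xᶜ.erase s).Nonempty
    · exact .inl ⟨h₁, h₂⟩
    · rw [not_nonempty_iff_eq_empty, erase_eq_empty_iff] at h₂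
      rcases h₂ with h | h
      · exact absurd h hX.2.ne_empty
      · exact .inr (.inr (by rw [← h, compl_compl]))
  · rw [not_nonempty_iff_eq_empty, erase_eq_empty_iff] at h₁
    rcases h₁ with h | h
    · exact absurd h hX.1.ne_empty
    · exact .inr (.inl h)

variable (m)

lemma edgesBetween_eq_sum_ite (A B : Finset V) :
    edgesBetween m A B = ∑ p : V × V, if p.1 ∈ A ∧ p.2 ∈ B then m s(p.1, p.2) else 0 := by
  rw [← sum_filter, edgesBetween]
  congr 1
  ext p
  simp

lemma cut_compl (X : Finset V) : cut m Xᶜ = cut m X := by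
  rw [cut, compl_compl, edgesBetween_comm, cut]

lemma cut_add (m' : Sym2 V → ℕ) (X : Finset V) : cut (m + m') X = cut m X + cut m' X := by
  simp [cut, edgesBetween, sum_add_distrib]

@[simp] lemma cut_empty : cut m ∅ = 0 := by simp [cut, edgesBetween]

lemma cut_single (a b : V) (X : Finset V) :
    cut (Pi.single s(a, b) 1) X =
      (if a ∈ X ∧ b ∉ X then 1 else 0) + if b ∈ X ∧ a ∉ X then 1 else 0 := by
  have h : ∀ p ∈ X ×ˢ Xᶜ, (Pi.single s(a, b) 1 : Sym2 V → ℕ) s(p.1, p.2) =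
      (Pi.single (a, b) 1 : V × V → ℕ) p + (Pi.single (b, a) 1 : V × V → ℕ) p := by
    rintro ⟨x, y⟩ hp
    have hxy : x ≠ y := by rintro rfl; simp_all
    simp only [Pi.single_apply, Sym2.eq_iff, Prod.mk.injEq]
    split_ifs <;> grind
  rw [cut, edgesBetween, sum_congr rfl h, sum_add_distrib, sum_pi_single', sum_pi_single']
  simp [and_comm]

lemma cut_add_cut_eq_inter_union (X Y : Finset V) :
    cut m X + cut m Y = cut m (X ∩ Y) + cut m (X ∪ Y) +
      (edgesBetween m (X \ Y) (Y \ X) + edgesBetween m (Y \ X) (X \ Y)) := by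
  simp only [cut, edgesBetween_eq_sum_ite, ← sum_add_distrib]
  refine sum_congr rfl fun p _ => ?_
  simp only [mem_inter, mem_union, mem_sdiff, mem_compl]
  split_ifs <;> grind

lemma cut_add_cut_eq_sdiff_sdiff (X Y : Finset V) :
    cut m X + cut m Y = cut m (X \ Y) + cut m (Y \ X) + 2 * edgesBetween m (X ∩ Y) (X ∪ Y)ᶜ := by
  have h := cut_add_cut_eq_inter_union m X Yᶜ
  rw [cut_compl, edgesBetween_comm m (Yᶜ \ X)] at h
  have h₁ : X ∩ Yᶜ = X \ Y := by ext; simp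
  have h₂ : X ∪ Yᶜ = (Y \ X)ᶜ := by ext; simp; tauto
  have h₃ : X \ Yᶜ = X ∩ Y := by ext; simp
  have h₄ : Yᶜ \ X = (X ∪ Y)ᶜ := by ext; simp; tauto
  rw [h₁, h₂, h₃, h₄, cut_compl] at h
  omega

lemma cut_add_cut_singleton (hs : s ∉ X) :
    cut m X + cut m {s} = cut m (insert s X) + 2 * edgesBetween m {s} X := by
  have h := cut_add_cut_eq_inter_union m X {s}
  rw [inter_singleton_of_notMem hs, cut_empty, union_singleton, sdiff_singleton_eq_erase,
    erase_eq_of_notMem hs, sdiff_eq_self_of_disjoint (disjoint_singleton_left.2 hs),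
    edgesBetween_comm m X] at h
  omega

variable {m}

lemma exists_pos_of_cut_singleton_pos (h : 0 < cut m {s}) : ∃ v, v ≠ s ∧ 0 < m s(s, v) := by
  rw [cut, edgesBetween_singleton_left] at h
  obtain ⟨v, hv, hpos⟩ := exists_ne_zero_of_sum_ne_zero h.ne'
  exact ⟨v, by simpa using hv, Nat.pos_of_ne_zero hpos⟩

end Cuts

section Orientation

variable {m : Sym2 V → ℕ} {o o' : V × V → ℕ}

lemma indeg_add (X : Finset V) : indeg (o + o') X = indeg o X + indeg o' X :=
  sum_add_distrib

lemma indeg_single (a b : V) (X : Finset V) :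
    indeg (Pi.single (a, b) 1) X = if a ∉ X ∧ b ∈ X then 1 else 0 := by
  simp [indeg, sum_pi_single']

/-- Only indegrees can be matched exactly: when `u = v`, `o` need not carry an arc on the loop. -/
lemma Orients.exists_arc {u v : V} (h : Orients (m + Pi.single s(u, v) 1) o) :
    ∃ c d o', s(c, d) = s(u, v) ∧ Orients m o' ∧ indeg o = indeg (o' + Pi.single (c, d) 1) := by
  rcases eq_or_ne u v with rfl | huv
  · refine ⟨u, u, o, rfl, fun x y hxy => ?_, ?_⟩
    · have hloop : ¬(x = u ∧ y = u) := fun h => hxy (h.1.trans h.2.symm)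
      simpa [Pi.single_apply, Sym2.eq_iff, hloop] using h x y hxy
    · ext X
      simp [indeg_add, indeg_single]
  · obtain ⟨c, d, hcd, hpos⟩ : ∃ c d, s(c, d) = s(u, v) ∧ 0 < o (c, d) := by
      have := h u v huv
      by_cases hu : 0 < o (u, v)
      · exact ⟨u, v, rfl, hu⟩
      · exact ⟨v, u, Sym2.eq_swap, by simp at this; omega⟩
    obtain ⟨o', rfl⟩ := exists_eq_add_single hpos
    exact ⟨c, d, o', hcd, orients_add_single_iff.1 (hcd ▸ h), rfl⟩

/-- The new orientation routes the arc on `uv` through `s`. -/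
lemma Orients.exists_reroute {o₁ : V × V → ℕ} {s u v : V}
    (ho₁ : Orients (m + Pi.single s(u, v) 1) o₁) (hu : u ≠ s) (hv : v ≠ s) :
    ∃ o, Orients (m + Pi.single s(s, u) 1 + Pi.single s(s, v) 1) o ∧
      (∀ X, indeg o₁ X ≤ indeg o X) ∧ indeg o₁ {s} < indeg o {s} ∧
      indeg o₁ {s}ᶜ < indeg o {s}ᶜ := by
  obtain ⟨c, d, o', hcd, ho', hindeg⟩ := ho₁.exists_arc
  have hcs : c ≠ s ∧ d ≠ s := by
    rcases Sym2.eq_iff.1 hcd with ⟨rfl, rfl⟩ | ⟨rfl, rfl⟩ <;> exact ⟨‹_›, ‹_›⟩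
  refine ⟨o' + Pi.single (c, s) 1 + Pi.single (s, d) 1, ?_, fun X => ?_, ?_, ?_⟩
  · have h := (orients_add_single_iff (a := s) (b := d)).2
      ((orients_add_single_iff (a := c) (b := s)).2 ho')
    rcases Sym2.eq_iff.1 hcd with ⟨rfl, rfl⟩ | ⟨rfl, rfl⟩
    · rwa [Sym2.eq_swap (a := c)] at h
    · rwa [Sym2.eq_swap (a := c), add_right_comm] at h
  all_goals
    rw [hindeg]
    simp only [indeg_add, indeg_single]
    split_ifs <;> simp_all

end Orientation

section Critical

variable {m : Sym2 V → ℕ} {B : ℕ} {X : Finset V}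

lemma card_mul_le_cut (hdeg : ∀ v ∈ X, B ≤ cut m {v})
    (hX : ∀ a ∈ X, ∀ b ∈ X, m s(a, b) = 0) : X.card * B ≤ cut m X := by
  rw [cut, edgesBetween, sum_product, card_eq_sum_ones, sum_mul, one_mul]
  refine sum_le_sum fun a ha => (hdeg a ha).trans ?_
  rw [cut, edgesBetween_singleton_left]
  refine sum_le_sum_of_ne_zero fun b _ hb => ?_
  rw [mem_compl]
  exact fun hbX => hb (hX a ha b hbX)

lemma exists_tight_of_critical (hcut : ∀ X, IsCut X → B ≤ cut m X)
    (hcrit : ∀ a b m', m = m' + Pi.single s(a, b) 1 → ∃ X, IsCut X ∧ cut m' X < B)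
    {a b : V} (hab : 0 < m s(a, b)) : ∃ Y, IsCut Y ∧ cut m Y = B ∧ a ∈ Y ∧ b ∉ Y := by
  obtain ⟨m', rfl⟩ := exists_eq_add_single hab
  obtain ⟨Y, hY, hlt⟩ := hcrit a b m' rfl
  have h := hcut Y hY
  simp only [cut_add, cut_single] at h
  by_cases haY : a ∈ Y <;> by_cases hbY : b ∈ Y
  · simp [haY, hbY] at h
    omega
  · refine ⟨Y, hY, ?_, haY, hbY⟩
    simp [cut_add, cut_single, haY, hbY] at h ⊢
    omega
  · refine ⟨Yᶜ, hY.compl, ?_, by simpa using haY, by simpa using hbY⟩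
    rw [cut_compl]
    simp [cut_add, cut_single, haY, hbY] at h ⊢
    omega
  · simp [haY, hbY] at h
    omega

lemma exists_tight_ssubset (hcut : ∀ X, IsCut X → B ≤ cut m X) {X Z : Finset V}
    (hX : IsCut X) (hXB : cut m X = B) (hZB : cut m Z = B) {a b : V}
    (ha : a ∈ X) (haZ : a ∈ Z) (hb : b ∈ X) (hbZ : b ∉ Z) :
    ∃ W, IsCut W ∧ cut m W = B ∧ W ⊆ X ∧ ¬X ⊆ W := by
  by_cases hU : (X ∪ Z)ᶜ.Nonempty
  · have hI : IsCut (X ∩ Z) := ⟨⟨a, mem_inter.2 ⟨ha, haZ⟩⟩, ⟨b, by simp [hbZ]⟩⟩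
    have := hcut _ hI
    have := hcut (X ∪ Z) ⟨⟨a, mem_union_left _ ha⟩, hU⟩
    have := cut_add_cut_eq_inter_union m X Z
    exact ⟨X ∩ Z, hI, by omega, inter_subset_left, fun h => hbZ (mem_inter.1 (h hb)).2⟩
  · rw [not_nonempty_iff_eq_empty, compl_eq_empty_iff] at hU
    have hXZ : IsCut (X \ Z) := ⟨⟨b, mem_sdiff.2 ⟨hb, hbZ⟩⟩, ⟨a, by simp [haZ]⟩⟩
    have hZX : IsCut (Z \ X) := by
      obtain ⟨c, hc⟩ := hX.2
      have hcZ : c ∈ X ∪ Z := hU ▸ mem_univ c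
      refine ⟨⟨c, ?_⟩, ⟨a, by simp [ha]⟩⟩
      simp only [mem_compl, mem_union] at hc hcZ
      simp [hc, hcZ.resolve_left hc]
    have := hcut _ hXZ
    have := hcut _ hZX
    have := cut_add_cut_eq_sdiff_sdiff m X Z
    exact ⟨X \ Z, hXZ, by omega, sdiff_subset, fun h => (mem_sdiff.1 (h ha)).2 haZ⟩

/-- Mader: in a minimally `B`-edge-connected multigraph an inclusion-minimal tight set is a single
vertex, since an edge inside it would cross another tight set. -/
theorem exists_cut_singleton_eq [Nontrivial V] (hB : 0 < B) (hcut : ∀ X, IsCut X → B ≤ cut m X)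
    (hcrit : ∀ a b m', m = m' + Pi.single s(a, b) 1 → ∃ X, IsCut X ∧ cut m' X < B) :
    ∃ s, cut m {s} = B := by
  by_contra! hne
  obtain ⟨v, -⟩ := exists_pair_ne V
  obtain ⟨w, -, hvw⟩ := exists_pos_of_cut_singleton_pos (hB.trans_le (hcut _ (isCut_singleton v)))
  obtain ⟨Y, hY, hYB, -⟩ := exists_tight_of_critical hcut hcrit hvw
  obtain ⟨X, -, hXmin⟩ :=
    exists_minimal_le_of_wellFoundedLT (fun X => IsCut X ∧ cut m X = B) Y ⟨hY, hYB⟩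
  obtain ⟨hX, hXB⟩ := hXmin.1
  obtain ⟨a, ha, b, hb, hab⟩ : ∃ a ∈ X, ∃ b ∈ X, 0 < m s(a, b) := by
    by_contra! h
    have h₂ : 2 ≤ X.card := by
      by_contra hlt
      obtain ⟨x, rfl⟩ := (card_eq_one (s := X)).1 (by have := hX.1.card_pos; omega)
      exact hne x hXB
    have := card_mul_le_cut (fun v _ => hcut _ (isCut_singleton v))
      fun a ha b hb => Nat.le_zero.1 (h a ha b hb)
    nlinarith
  obtain ⟨Z, -, hZB, haZ, hbZ⟩ := exists_tight_of_critical hcut hcrit hab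
  obtain ⟨W, hW, hWB, hWX, hXW⟩ := exists_tight_ssubset hcut hX hXB hZB ha haZ hb hbZ
  exact hXW (hXmin.2 ⟨hW, hWB⟩ hWX)

end Critical

section Splitting

variable {m : Sym2 V → ℕ} {B j : ℕ} {s t : V} {X Y M N L : Finset V}

/-- Lovász's dangerous sets: splitting off two edges of `s` that end in `X` would push `d(X)`
below `B`. All dangerous sets are taken to contain a fixed neighbour `t` of `s`. -/
def IsDangerous (m : Sym2 V → ℕ) (B : ℕ) (s t : V) (X : Finset V) : Prop :=
  s ∉ X ∧ t ∈ X ∧ (Xᶜ.erase s).Nonempty ∧ cut m X ≤ B + 1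

lemma edgesBetween_singleton_le_of_isDangerous (hcut : ∀ X, IsCutAway s X → B ≤ cut m X)
    (hdeg : cut m {s} = 2 * j) (ht : t ≠ s) (hX : IsDangerous m B s t X) :
    edgesBetween m {s} X ≤ j := by
  have hins : IsCutAway s (insert s X) := by
    refine ⟨⟨t, by simp [ht, hX.2.1]⟩, ?_⟩
    have : (insert s X)ᶜ.erase s = Xᶜ.erase s := by ext; simp
    rw [this]
    exact hX.2.2.1
  have := cut_add_cut_singleton m hX.1
  have := hcut _ hins
  have := hX.2.2.2
  omega

lemma exists_neighbor_notMem (hcut : ∀ X, IsCutAway s X → B ≤ cut m X)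
    (hdeg : cut m {s} = 2 * j) (ht : t ≠ s) (hst : 0 < m s(s, t))
    (hX : IsDangerous m B s t X) (hY : IsDangerous m B s t Y) :
    ∃ w, w ≠ s ∧ 0 < m s(s, w) ∧ w ∉ X ∧ w ∉ Y := by
  by_contra! hcov
  have h₁ : cut m {s} ≤ ∑ y ∈ X ∪ Y, m s(s, y) := by
    rw [cut, edgesBetween_singleton_left]
    refine sum_le_sum_of_ne_zero fun y hy hne => ?_
    by_contra hXY
    simp only [mem_union, not_or] at hXY
    exact hXY.2 (hcov y (by simpa using hy) (Nat.pos_of_ne_zero hne) hXY.1)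
  have h₂ := sum_union_inter (s₁ := X) (s₂ := Y) (f := fun y => m s(s, y))
  have h₃ : m s(s, t) ≤ ∑ y ∈ X ∩ Y, m s(s, y) :=
    single_le_sum (f := fun y => m s(s, y)) (fun _ _ => Nat.zero_le _)
      (mem_inter.2 ⟨hX.2.1, hY.2.1⟩)
  have hXj := edgesBetween_singleton_le_of_isDangerous hcut hdeg ht hX
  have hYj := edgesBetween_singleton_le_of_isDangerous hcut hdeg ht hY
  rw [edgesBetween_singleton_left] at hXj hYj
  omega

lemma le_cut_union_of_maximal (hcut : ∀ X, IsCutAway s X → B ≤ cut m X)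
    (hdeg : cut m {s} = 2 * j) (ht : t ≠ s) (hst : 0 < m s(s, t))
    (hM : Maximal (IsDangerous m B s t) M) (hN : Maximal (IsDangerous m B s t) N) (hMN : M ≠ N) :
    B + 2 ≤ cut m (M ∪ N) := by
  by_contra! hlt
  obtain ⟨w, hws, -, hwM, hwN⟩ := exists_neighbor_notMem hcut hdeg ht hst hM.1 hN.1
  have hD : IsDangerous m B s t (M ∪ N) :=
    ⟨by simp [hM.1.1, hN.1.1], mem_union_left _ hM.1.2.1, ⟨w, by simp [hws, hwM, hwN]⟩,
      by omega⟩
  exact hMN ((hM.eq_of_le hD subset_union_left).trans (hN.eq_of_le hD subset_union_right).symm)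

lemma cut_inter_le_of_maximal (hcut : ∀ X, IsCutAway s X → B ≤ cut m X)
    (hdeg : cut m {s} = 2 * j) (ht : t ≠ s) (hst : 0 < m s(s, t))
    (hM : Maximal (IsDangerous m B s t) M) (hN : Maximal (IsDangerous m B s t) N) (hMN : M ≠ N) :
    cut m (M ∩ N) ≤ B := by
  have := cut_add_cut_eq_inter_union m M N
  have := le_cut_union_of_maximal hcut hdeg ht hst hM hN hMN
  have := hM.1.2.2.2
  have := hN.1.2.2.2
  omega

lemma isCutAway_sdiff_of_maximal (ht : t ≠ s) (hM : Maximal (IsDangerous m B s t) M)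
    (hN : Maximal (IsDangerous m B s t) N) (hMN : M ≠ N) : IsCutAway s (M \ N) := by
  obtain ⟨a, haM, haN⟩ := not_subset.1 fun h => hMN (hM.eq_of_le hN.1 h)
  exact ⟨⟨a, mem_erase.2 ⟨ne_of_mem_of_not_mem haM hM.1.1, mem_sdiff.2 ⟨haM, haN⟩⟩⟩,
    ⟨t, by simp [ht, hN.1.2.1]⟩⟩

lemma edgesBetween_inter_le_one_of_maximal (hcut : ∀ X, IsCutAway s X → B ≤ cut m X)
    (ht : t ≠ s) (hM : Maximal (IsDangerous m B s t) M) (hN : Maximal (IsDangerous m B s t) N)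
    (hMN : M ≠ N) : edgesBetween m (M ∩ N) (M ∪ N)ᶜ ≤ 1 := by
  have := cut_add_cut_eq_sdiff_sdiff m M N
  have := hcut _ (isCutAway_sdiff_of_maximal ht hM hN hMN)
  have := hcut _ (isCutAway_sdiff_of_maximal ht hN hM hMN.symm)
  have := hM.1.2.2.2
  have := hN.1.2.2.2
  omega

lemma inter_subset_of_maximal (hcut : ∀ X, IsCutAway s X → B ≤ cut m X)
    (hdeg : cut m {s} = 2 * j) (ht : t ≠ s) (hst : 0 < m s(s, t))
    (hM : Maximal (IsDangerous m B s t) M) (hN : Maximal (IsDangerous m B s t) N)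
    (hL : Maximal (IsDangerous m B s t) L) (hMN : M ≠ N) : M ∩ N ⊆ L := by
  obtain ⟨w, hws, -, hwM, hwL⟩ := exists_neighbor_notMem hcut hdeg ht hst hM.1 hL.1
  have := cut_inter_le_of_maximal hcut hdeg ht hst hM hN hMN
  have := hcut (M ∩ N ∩ L)
    ⟨⟨t, by simp [ht, hM.1.2.1, hN.1.2.1, hL.1.2.1]⟩, ⟨w, by simp [hws, hwM]⟩⟩
  have := cut_add_cut_eq_inter_union m (M ∩ N) L
  have := hL.1.2.2.2
  have hD : IsDangerous m B s t (M ∩ N ∪ L) :=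
    ⟨by simp [hM.1.1, hL.1.1], mem_union_right _ hL.1.2.1, ⟨w, by simp [hws, hwM, hwL]⟩, by omega⟩
  exact (union_subset_iff.1 (hL.2 hD subset_union_right)).1

/-- Every vertex outside `M₁ ∩ M₂` lies outside two of the three sets, so the edge `ts` is the
only edge leaving `M₁ ∩ M₂`. -/
lemma cut_inter_le_one_of_maximal (hcut : ∀ X, IsCutAway s X → B ≤ cut m X)
    (hdeg : cut m {s} = 2 * j) (ht : t ≠ s) (hst : 0 < m s(s, t))
    {M₁ M₂ M₃ : Finset V} (hM₁ : Maximal (IsDangerous m B s t) M₁)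
    (hM₂ : Maximal (IsDangerous m B s t) M₂) (hM₃ : Maximal (IsDangerous m B s t) M₃)
    (h₁₂ : M₁ ≠ M₂) (h₁₃ : M₁ ≠ M₃) (h₂₃ : M₂ ≠ M₃) : cut m (M₁ ∩ M₂) ≤ 1 := by
  have htri := fun {M N L} => inter_subset_of_maximal (M := M) (N := N) (L := L) hcut hdeg ht hst
  have hzero : ∀ p ∈ (M₁ ∩ M₂) ×ˢ (M₁ ∩ M₂)ᶜ, p ≠ (t, s) → m s(p.1, p.2) = 0 := by
    rintro ⟨a, b⟩ hab hne
    simp only [mem_product, mem_inter, mem_compl] at hab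
    have key : ∀ P Q, Maximal (IsDangerous m B s t) P → Maximal (IsDangerous m B s t) Q →
        P ≠ Q → a ∈ P → a ∈ Q → b ∉ P → b ∉ Q → m s(a, b) = 0 := by
      intro P Q hP hQ hPQ haP haQ hbP hbQ
      refine eq_zero_of_edgesBetween_le_one (edgesBetween_inter_le_one_of_maximal hcut ht hP hQ hPQ)
        (q := (t, s)) (by simp [*]) ?_ hne (by rwa [Sym2.eq_swap])
      simp [hP.1.2.1, hQ.1.2.1, hP.1.1, hQ.1.1]
    have haM₃ : a ∈ M₃ := htri hM₁ hM₂ hM₃ h₁₂ (mem_inter.2 hab.1)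
    by_cases hbM₁ : b ∈ M₁
    · have hbM₂ : b ∉ M₂ := fun h => hab.2 ⟨hbM₁, h⟩
      have hbM₃ : b ∉ M₃ := fun h => hbM₂ (htri hM₁ hM₃ hM₂ h₁₃ (mem_inter.2 ⟨hbM₁, h⟩))
      exact key M₂ M₃ hM₂ hM₃ h₂₃ hab.1.2 haM₃ hbM₂ hbM₃
    · by_cases hbM₂ : b ∈ M₂
      · have hbM₃ : b ∉ M₃ := fun h => hbM₁ (htri hM₂ hM₃ hM₁ h₂₃ (mem_inter.2 ⟨hbM₂, h⟩))
        exact key M₁ M₃ hM₁ hM₃ h₁₃ hab.1.1 haM₃ hbM₁ hbM₃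
      · exact key M₁ M₂ hM₁ hM₂ h₁₂ hab.1.1 hab.1.2 hbM₁ hbM₂
  have hts : (t, s) ∈ (M₁ ∩ M₂) ×ˢ (M₁ ∩ M₂)ᶜ := by simp [hM₁.1.2.1, hM₂.1.2.1, hM₁.1.1]
  rw [cut, edgesBetween, sum_eq_single_of_mem _ hts hzero]
  exact (single_le_sum (f := fun p : V × V => m s(p.1, p.2)) (fun _ _ => Nat.zero_le _)
    (a := (t, s)) (by simp [hM₁.1.2.1, hM₂.1.2.1, hM₁.1.1, hM₂.1.1])).trans
    (edgesBetween_inter_le_one_of_maximal hcut ht hM₁ hM₂ h₁₂)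

lemma false_of_forall_mem_maximal (hB : 2 ≤ B) (hcut : ∀ X, IsCutAway s X → B ≤ cut m X)
    (hdeg : cut m {s} = 2 * j) (ht : t ≠ s) (hst : 0 < m s(s, t))
    (hcover : ∀ u, u ≠ s → 0 < m s(s, u) → ∃ M, Maximal (IsDangerous m B s t) M ∧ u ∈ M) :
    False := by
  obtain ⟨M₁, hM₁, -⟩ := hcover t ht hst
  obtain ⟨u₂, hu₂, hu₂pos, hu₂M₁, -⟩ := exists_neighbor_notMem hcut hdeg ht hst hM₁.1 hM₁.1
  obtain ⟨M₂, hM₂, hu₂M₂⟩ := hcover u₂ hu₂ hu₂pos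
  obtain ⟨u₃, hu₃, hu₃pos, hu₃M₁, hu₃M₂⟩ := exists_neighbor_notMem hcut hdeg ht hst hM₁.1 hM₂.1
  obtain ⟨M₃, hM₃, hu₃M₃⟩ := hcover u₃ hu₃ hu₃pos
  have h₁₂ : M₁ ≠ M₂ := by rintro rfl; exact hu₂M₁ hu₂M₂
  have h₁₃ : M₁ ≠ M₃ := by rintro rfl; exact hu₃M₁ hu₃M₃
  have h₂₃ : M₂ ≠ M₃ := by rintro rfl; exact hu₃M₂ hu₃M₃
  have := cut_inter_le_one_of_maximal hcut hdeg ht hst hM₁ hM₂ hM₃ h₁₂ h₁₃ h₂₃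
  have := hcut (M₁ ∩ M₂) ⟨⟨t, by simp [ht, hM₁.1.2.1, hM₂.1.2.1]⟩, ⟨u₂, by simp [hu₂, hu₂M₁]⟩⟩
  omega

theorem exists_admissible_pair (hB : 2 ≤ B) (hcut : ∀ X, IsCutAway s X → B ≤ cut m X)
    (hdeg : cut m {s} = 2 * j) (hj : 0 < j) :
    ∃ (u v : V) (m' : Sym2 V → ℕ), m = m' + Pi.single s(s, u) 1 + Pi.single s(s, v) 1 ∧
      u ≠ s ∧ v ≠ s ∧
      ∀ X, s ∉ X → IsCutAway s X → u ∈ X → v ∈ X → B + 2 ≤ cut m X := by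
  obtain ⟨t, ht, hst⟩ := exists_pos_of_cut_singleton_pos (by omega : 0 < cut m {s})
  by_contra! hno
  refine false_of_forall_mem_maximal hB hcut hdeg ht hst fun u hu hsu => ?_
  obtain ⟨m₀, hm₀⟩ := exists_eq_add_single hst
  obtain ⟨v, hv, hsv, huv⟩ : ∃ v, v ≠ s ∧ 0 < m₀ s(s, v) ∧ (u = t ∨ u = v) := by
    by_cases hut : u = t
    · have : cut m {s} = cut m₀ {s} + 1 := by rw [hm₀, cut_add, cut_single]; simp [ht]
      obtain ⟨v, hv, hsv⟩ := exists_pos_of_cut_singleton_pos (by omega : 0 < cut m₀ {s})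
      exact ⟨v, hv, hsv, .inl hut⟩
    · refine ⟨u, hu, ?_, .inr rfl⟩
      have : m s(s, u) = m₀ s(s, u) := by rw [hm₀]; simp [hut, hu]
      omega
  obtain ⟨m₁, rfl⟩ := exists_eq_add_single hsv
  obtain ⟨X, hsX, hX, htX, hvX, hXcut⟩ := hno t v m₁ (by rw [hm₀, add_right_comm]) ht hv
  obtain ⟨M, hXM, hM⟩ :=
    exists_maximal_ge_of_wellFoundedGT (IsDangerous m B s t) X ⟨hsX, htX, hX.2, by omega⟩
  exact ⟨M, hM, hXM (by rcases huv with rfl | rfl <;> assumption)⟩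

/-- Lovász's splitting lemma. -/
theorem exists_admissible_split (hB : 2 ≤ B) (hcut : ∀ X, IsCutAway s X → B ≤ cut m X)
    (hdeg : cut m {s} = 2 * j) (hj : 0 < j) :
    ∃ (u v : V) (m' : Sym2 V → ℕ), m = m' + Pi.single s(s, u) 1 + Pi.single s(s, v) 1 ∧
      u ≠ s ∧ v ≠ s ∧
      ∀ X, IsCutAway s X → B ≤ cut (m' + Pi.single s(u, v) 1) X := by
  obtain ⟨u, v, m', rfl, hu, hv, hadm⟩ := exists_admissible_pair hB hcut hdeg hj
  refine ⟨u, v, m', rfl, hu, hv, fun X hX => ?_⟩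
  wlog hsX : s ∉ X generalizing X
  · simpa [cut_compl] using this Xᶜ hX.compl (by simpa using hsX)
  have h := hcut X hX
  simp only [cut_add, cut_single] at h hadm ⊢
  by_cases huX : u ∈ X <;> by_cases hvX : v ∈ X
  · have := hadm X hsX hX huX hvX
    simp_all
  all_goals simp_all

end Splitting

section DeleteVertex

variable {s : V} {X : Finset V}

lemma compl_subtype_ne (X : Finset V) : (X.subtype (· ≠ s))ᶜ = Xᶜ.subtype (· ≠ s) := by
  ext
  simp

lemma IsCutAway.isCut_subtype (hX : IsCutAway s X) : IsCut (X.subtype (· ≠ s)) := by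
  obtain ⟨⟨a, ha⟩, ⟨b, hb⟩⟩ := hX
  rw [mem_erase] at ha hb
  exact ⟨⟨⟨a, ha.1⟩, by simpa using ha.2⟩, ⟨⟨b, hb.1⟩, by simpa [compl_subtype_ne] using hb.2⟩⟩

lemma cut_comp_map_subtype_val {m : Sym2 V → ℕ} (hiso : ∀ y, y ≠ s → m s(s, y) = 0)
    (X : Finset V) : cut (m ∘ Sym2.map Subtype.val) (X.subtype (· ≠ s)) = cut m X := by
  rw [cut, edgesBetween, compl_subtype_ne, cut, edgesBetween,
    ← sum_product_subtype_ne (s := s) X Xᶜ]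
  · simp [Sym2.map_mk]
  · rintro a ha b hb (rfl | rfl)
    · exact hiso b (by rintro rfl; simp_all)
    · exact Sym2.eq_swap ▸ hiso a (by rintro rfl; simp_all)

lemma exists_orients_of_comp_map_subtype_val {m : Sym2 V → ℕ}
    (hiso : ∀ y, y ≠ s → m s(s, y) = 0) {o' : {x // x ≠ s} × {x // x ≠ s} → ℕ}
    (ho' : Orients (m ∘ Sym2.map Subtype.val) o') :
    ∃ o, Orients m o ∧ ∀ X, indeg o X = indeg o' (X.subtype (· ≠ s)) := by
  let o : V × V → ℕ := fun q => if h : q.1 ≠ s ∧ q.2 ≠ s then o' (⟨q.1, h.1⟩, ⟨q.2, h.2⟩) else 0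
  have ho_left : ∀ y, o (s, y) = 0 := fun y => dif_neg (by simp)
  have ho_right : ∀ x, o (x, s) = 0 := fun x => dif_neg (by simp)
  refine ⟨o, fun x y hxy => ?_, fun X => ?_⟩
  · by_cases hx : x = s
    · subst hx
      rw [ho_left, ho_right, hiso y (Ne.symm hxy)]
    by_cases hy : y = s
    · subst hy
      rw [ho_left, ho_right, Sym2.eq_swap, hiso x hxy]
    simpa [o, hx, hy] using ho' ⟨x, hx⟩ ⟨y, hy⟩ (by simpa using hxy)
  · rw [indeg, indeg, compl_subtype_ne, ← sum_product_subtype_ne (s := s)]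
    · exact sum_congr rfl fun q _ => by simp [o, q.1.2, q.2.2]
    · rintro a - b - (rfl | rfl)
      exacts [ho_left b, ho_right a]

theorem exists_orientation_of_isolated {K : ℕ}
    (IH : ∀ m' : Sym2 {x // x ≠ s} → ℕ, (∀ X, IsCut X → 2 * K ≤ cut m' X) →
      ∃ o', Orients m' o' ∧ ∀ X, IsCut X → K ≤ indeg o' X)
    (m : Sym2 V → ℕ) (hiso : ∀ y, y ≠ s → m s(s, y) = 0)
    (hcut : ∀ X, IsCutAway s X → 2 * K ≤ cut m X) :
    ∃ o, Orients m o ∧ ∀ X, IsCutAway s X → K ≤ indeg o X := by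
  obtain ⟨o', ho', hin'⟩ := IH (m ∘ Sym2.map Subtype.val) fun X' ⟨⟨a, ha⟩, ⟨b, hb⟩⟩ => by
    rw [show X' = (X'.map (Function.Embedding.subtype _)).subtype (· ≠ s) by ext x; simp [x.2],
      cut_comp_map_subtype_val hiso]
    refine hcut _ ⟨⟨a, ?_⟩, ⟨b, ?_⟩⟩
    · simp [a.2, ha]
    · simpa [b.2] using hb
  obtain ⟨o, ho, hindeg⟩ := exists_orients_of_comp_map_subtype_val hiso ho'
  exact ⟨o, ho, fun X hX => hindeg X ▸ hin' _ hX.isCut_subtype⟩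

end DeleteVertex

theorem exists_orientation_of_cut_singleton_eq {K : ℕ} (hK : 0 < K) {s : V}
    (hiso : ∀ m : Sym2 V → ℕ, (∀ y, y ≠ s → m s(s, y) = 0) →
      (∀ X, IsCutAway s X → 2 * K ≤ cut m X) →
      ∃ o, Orients m o ∧ ∀ X, IsCutAway s X → K ≤ indeg o X)
    (j : ℕ) (m : Sym2 V → ℕ) (hdeg : cut m {s} = 2 * j)
    (hcut : ∀ X, IsCutAway s X → 2 * K ≤ cut m X) :
    ∃ o, Orients m o ∧ (∀ X, IsCutAway s X → K ≤ indeg o X) ∧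
      j ≤ indeg o {s} ∧ j ≤ indeg o {s}ᶜ := by
  induction j generalizing m with
  | zero =>
    rw [cut, edgesBetween_singleton_left, mul_zero, sum_eq_zero_iff] at hdeg
    obtain ⟨o, ho, hin⟩ := hiso m (fun y hy => hdeg y (by simpa using hy)) hcut
    exact ⟨o, ho, hin, Nat.zero_le _, Nat.zero_le _⟩
  | succ j ih =>
    obtain ⟨u, v, m', rfl, hu, hv, hadm⟩ :=
      exists_admissible_split (by omega) hcut hdeg (by omega)
    have hdeg' : cut (m' + Pi.single s(u, v) 1) {s} = 2 * j := by
      simp [cut_add, cut_single, hu, hv] at hdeg ⊢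
      omega
    obtain ⟨o₁, ho₁, hin₁, hs₁, hsc₁⟩ := ih _ hdeg' hadm
    obtain ⟨o, ho, hle, hs, hsc⟩ := ho₁.exists_reroute hu hv
    exact ⟨o, ho, fun X hX => (hin₁ X hX).trans (hle X), by omega, by omega⟩

theorem exists_orientation_le_indeg {K : ℕ} (hK : 0 < K) (m : Sym2 V → ℕ)
    (hcut : ∀ X, IsCut X → 2 * K ≤ cut m X) :
    ∃ o, Orients m o ∧ ∀ X, IsCut X → K ≤ indeg o X := by
  have key := Fintype.induction_subsingleton_or_nontrivial
    (P := fun V [Fintype V] => ∀ [DecidableEq V] (m : Sym2 V → ℕ),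
      (∀ X, IsCut X → 2 * K ≤ cut m X) → ∃ o, Orients m o ∧ ∀ X, IsCut X → K ≤ indeg o X) V ?_ ?_
  · exact key m hcut
  · intro V _ _ _ m _
    refine ⟨0, fun x y hxy => absurd (Subsingleton.elim x y) hxy, ?_⟩
    rintro X ⟨⟨a, ha⟩, ⟨b, hb⟩⟩
    exact absurd (Subsingleton.elim a b ▸ ha) (by simpa using hb)
  · intro V _ _ IH _ m hcut
    induction hsz : ∑ e, m e using Nat.strong_induction_on generalizing m with | _ n ih => ?_
    by_cases hrem : ∃ a b m', m = m' + Pi.single s(a, b) 1 ∧ ∀ X, IsCut X → 2 * K ≤ cut m' X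
    · obtain ⟨a, b, m', rfl, hm'⟩ := hrem
      obtain ⟨o, ho, hin⟩ := ih _ (by rw [← hsz]; simp [sum_add_distrib]) m' hm' rfl
      exact ⟨o + Pi.single (a, b) 1, orients_add_single_iff.2 ho,
        fun X hX => (hin X hX).trans (by simp [indeg_add])⟩
    · push Not at hrem
      obtain ⟨s, hs⟩ := exists_cut_singleton_eq (by omega) hcut hrem
      obtain ⟨o, ho, hin, hins, hinsc⟩ := exists_orientation_of_cut_singleton_eq hK
        (exists_orientation_of_isolated (IH _ (Fintype.card_subtype_lt (x := s) (by simp))))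
        K m hs fun X hX => hcut X hX.isCut
      refine ⟨o, ho, fun X hX => ?_⟩
      rcases hX.isCutAway_or_eq s with h | rfl | rfl
      exacts [hin X h, hins, hinsc]

section SimpleGraph

variable (G : SimpleGraph V)

lemma cut_indicator_edgeSet (X : Finset V) :
    cut (G.edgeSet.indicator 1) X = Nat.card {p : V × V // p.1 ∈ X ∧ p.2 ∉ X ∧ G.Adj p.1 p.2} := by
  classical
  rw [Nat.card_eq_fintype_card, Fintype.card_subtype, card_filter, cut, edgesBetween_eq_sum_ite]
  refine sum_congr rfl fun p _ => ?_
  by_cases h₁ : p.1 ∈ X <;> by_cases h₂ : p.2 ∈ X <;> simp [h₁, h₂, Set.indicator_apply]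

lemma indeg_eq_natCard {o : V × V → ℕ} (ho : Orients (G.edgeSet.indicator 1) o) (X : Finset V) :
    indeg o X = Nat.card {p : V × V // (G.Adj p.1 p.2 ∧ 0 < o p) ∧ p.1 ∉ X ∧ p.2 ∈ X} := by
  classical
  have hXX : (univ.filter fun p : V × V => p.1 ∉ X ∧ p.2 ∈ X) = Xᶜ ×ˢ X := by ext; simp
  rw [indeg, ← hXX, sum_filter, Nat.card_eq_fintype_card, Fintype.card_subtype, card_filter]
  refine sum_congr rfl fun ⟨x, y⟩ _ => ?_
  by_cases hxy : x ∉ X ∧ y ∈ X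
  · have := ho x y (by rintro rfl; exact hxy.1 hxy.2)
    by_cases hadj : G.Adj x y
    · simp only [Set.indicator_apply, SimpleGraph.mem_edgeSet, hadj, if_true, Pi.one_apply] at this
      simp only [hadj, hxy.1, hxy.2, true_and, not_false_eq_true, and_true, if_true]
      split_ifs <;> omega
    · simp [hadj, hxy] at this ⊢
      omega
  · simp [hxy]

end SimpleGraph

end NashWilliams

lemma IsOrientation.card_in_add_card_out_le {V : Type*} [Fintype V] {G : SimpleGraph V}
    {D : V → V → Prop} (hD : IsOrientation G D) (X : Set V) :
    Nat.card {p : V × V // D p.1 p.2 ∧ p.1 ∉ X ∧ p.2 ∈ X} +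
        Nat.card {p : V × V // D p.1 p.2 ∧ p.1 ∉ Xᶜ ∧ p.2 ∈ Xᶜ} ≤
      Nat.card {p : V × V // p.1 ∈ X ∧ p.2 ∉ X ∧ G.Adj p.1 p.2} := by
  classical
  simp only [Nat.card_eq_fintype_card, Fintype.card_subtype, Finset.card_filter]
  rw [← Equiv.sum_comp (Equiv.prodComm V V), ← Finset.sum_add_distrib]
  refine Finset.sum_le_sum fun ⟨x, y⟩ _ => ?_
  have h₁ := hD.1 x y
  have h₂ := hD.1 y x
  have h₃ := hD.2 x y
  by_cases hx : x ∈ X <;> by_cases hy : y ∈ X <;> by_cases hxy : D x y <;> by_cases hyx : D y x <;>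
    simp_all [G.adj_comm]

/-- Nash-Williams for k = 2: a finite graph has a 2-arc-connected orientation
iff it is 4-edge-connected. -/
theorem stmt_1 {V : Type*} [Fintype V] (G : SimpleGraph V) :
    (∃ D : V → V → Prop, IsOrientation G D ∧ ArcConn D 2) ↔ EdgeConn G 4 := by
  classical
  constructor
  · rintro ⟨D, hD, hconn⟩ X hX hXu
    have := hconn X hX hXu
    have := hconn Xᶜ (Set.nonempty_compl.2 hXu) (Set.compl_ne_univ.2 hX)
    have := hD.card_in_add_card_out_le X
    omega
  · intro hG
    obtain ⟨o, ho, hin⟩ := NashWilliams.exists_orientation_le_indeg two_pos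
      (G.edgeSet.indicator 1) fun X ⟨hX, hXc⟩ => by
        obtain ⟨x, hx⟩ := hXc
        rw [NashWilliams.cut_indicator_edgeSet]
        exact hG X (by simpa using hX) fun h =>
          Finset.mem_compl.1 hx (by simpa using Set.eq_univ_iff_forall.1 h x)
    refine ⟨fun x y => G.Adj x y ∧ 0 < o (x, y), ⟨fun a b h => h.1, fun a b hab => ?_⟩,
      fun X hX hXu => ?_⟩
    · have := ho a b hab.ne
      simp only [Set.indicator_apply, SimpleGraph.mem_edgeSet, hab, if_true, Pi.one_apply] at this
      simp only [hab, hab.symm, true_and, not_lt]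
      omega
    · obtain ⟨x, hx⟩ := (Set.ne_univ_iff_exists_notMem X).1 hXu
      have := hin X.toFinset ⟨Set.toFinset_nonempty.2 hX, x, by simpa using hx⟩
      rw [NashWilliams.indeg_eq_natCard G ho] at this
      simpa using this
end

section
/- If a finite graph G has a 2-vertex-connected orientation, then G is 4-edge-connected and G − v is 2-edge-connected for every vertex v. -/
open Relation

/-! An orientation splits the boundary edges of a vertex set `X` into arcs leaving and arcs
entering `X`, so a `k`-arc-connected orientation of `G` makes `G` `2k`-edge-connected.
A 2-vertex-connected digraph is 2-arc-connected: if `(u, v)` were the only arc entering `X`,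
then `D - v` (or `D - u` when `X = {v}`) would have no path from outside `X` into `X`.
Likewise `D - v` is strongly connected, hence 1-arc-connected, and it orients `G - v`. -/

section

variable {V : Type*} {D : V → V → Prop}

lemma Relation.ReflTransGen.exists_arc_into {X : Set V} {a b : V}
    (h : ReflTransGen D a b) (ha : a ∉ X) (hb : b ∈ X) :
    ∃ p : V × V, D p.1 p.2 ∧ p.1 ∉ X ∧ p.2 ∈ X := by
  induction h with
  | refl => exact absurd hb ha
  | @tail c d _ hcd ih =>
    by_cases hc : c ∈ X
    · exact ih hc
    · exact ⟨(c, d), hcd, hc, hb⟩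

lemma StrongConn.arcConn_one [Finite V] (hD : StrongConn D) : ArcConn D 1 := by
  intro X ⟨b, hb⟩ hX
  obtain ⟨a, ha⟩ := (Set.ne_univ_iff_exists_notMem X).mp hX
  obtain ⟨p, hp⟩ := (hD a b).exists_arc_into ha hb
  have : Nonempty {p : V × V // D p.1 p.2 ∧ p.1 ∉ X ∧ p.2 ∈ X} := ⟨⟨p, hp⟩⟩
  exact Nat.card_pos

lemma TwoVC.arcConn_two [Finite V] (hD : TwoVC D) : ArcConn D 2 := by
  obtain ⟨hcard, hconn, havoid⟩ := hD
  intro X ⟨b, hb⟩ hX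
  obtain ⟨a, ha⟩ := (Set.ne_univ_iff_exists_notMem X).mp hX
  obtain ⟨⟨u, v⟩, huv, hu, hv⟩ := (hconn a b).exists_arc_into ha hb
  suffices ∃ p : V × V, D p.1 p.2 ∧ p.1 ∉ X ∧ p.2 ∈ X ∧ p ≠ (u, v) by
    obtain ⟨p, hp, hpX, hpX', hpuv⟩ := this
    have : Nontrivial {p : V × V // D p.1 p.2 ∧ p.1 ∉ X ∧ p.2 ∈ X} :=
      nontrivial_of_ne ⟨p, hp, hpX, hpX'⟩ ⟨(u, v), huv, hu, hv⟩ (by simpa using hpuv)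
    exact Finite.one_lt_card
  by_cases hXv : ∃ c ∈ X, c ≠ v
  · obtain ⟨c, hc, hcv⟩ := hXv
    have hav : a ≠ v := fun h => ha (h ▸ hv)
    obtain ⟨p, ⟨hp, -, hpv⟩, hpX, hpX'⟩ :=
      (havoid v a c hav hcv).exists_arc_into ha hc
    exact ⟨p, hp, hpX, hpX', fun h => hpv (by rw [h])⟩
  · push Not at hXv
    have h3 : 3 ≤ ENat.card V := by
      rw [ENat.card_eq_coe_natCard]
      exact_mod_cast hcard
    obtain ⟨w, hwu, hwv⟩ := ENat.exists_ne_ne_of_three_le h3 u v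
    have hwX : w ∉ X := fun hw => hwv (hXv w hw)
    have hvu : v ≠ u := fun h => hu (h ▸ hv)
    obtain ⟨p, ⟨hp, hpu, -⟩, hpX, hpX'⟩ :=
      (havoid u w v hwu hvu).exists_arc_into hwX hv
    exact ⟨p, hp, hpX, hpX', fun h => hpu (by rw [h])⟩

lemma ArcConn.le_card_arcs_out {k : ℕ} (hD : ArcConn D k) {X : Set V}
    (hne : X.Nonempty) (hX : X ≠ Set.univ) :
    k ≤ Nat.card {p : V × V // D p.1 p.2 ∧ p.1 ∈ X ∧ p.2 ∉ X} := by
  have := hD Xᶜ (Set.nonempty_compl.mpr hX) (fun h => hne.ne_empty (Set.compl_univ_iff.mp h))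
  simpa only [Set.mem_compl_iff, not_not] using this

lemma IsOrientation.card_arcs_out_add_card_arcs_in_le [Finite V] {G : SimpleGraph V}
    (hor : IsOrientation G D) (X : Set V) :
    Nat.card {p : V × V // D p.1 p.2 ∧ p.1 ∈ X ∧ p.2 ∉ X} +
      Nat.card {p : V × V // D p.1 p.2 ∧ p.1 ∉ X ∧ p.2 ∈ X} ≤
      Nat.card {p : V × V // p.1 ∈ X ∧ p.2 ∉ X ∧ G.Adj p.1 p.2} := by
  have not_both {x y : V} (hxy : D x y) (hyx : D y x) : False :=
    (hor.2 x y (hor.1 x y hxy)).mp hxy hyx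
  rw [← Nat.card_sum]
  refine Nat.card_le_card_of_injective
    (Sum.elim (fun q => ⟨q.1, q.2.2.1, q.2.2.2, hor.1 _ _ q.2.1⟩)
      (fun q => ⟨q.1.swap, q.2.2.2, q.2.2.1, (hor.1 _ _ q.2.1).symm⟩)) ?_
  rintro (⟨⟨x, y⟩, hp⟩ | ⟨⟨x, y⟩, hp⟩) (⟨⟨x', y'⟩, hq⟩ | ⟨⟨x', y'⟩, hq⟩) h <;>
    simp only [Sum.elim_inl, Sum.elim_inr, Subtype.mk.injEq, Prod.swap_prod_mk,
      Prod.mk.injEq] at h <;> obtain ⟨rfl, rfl⟩ := h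
  · rfl
  · exact (not_both hp.1 hq.1).elim
  · exact (not_both hp.1 hq.1).elim
  · rfl

lemma IsOrientation.edgeConn_of_arcConn [Finite V] {G : SimpleGraph V}
    (hor : IsOrientation G D) {k : ℕ} (hD : ArcConn D k) : EdgeConn G (2 * k) := by
  intro X hne hX
  have h_in := hD X hne hX
  have h_out := hD.le_card_arcs_out hne hX
  have h_sum := hor.card_arcs_out_add_card_arcs_in_le X
  omega

lemma IsOrientation.induce {G : SimpleGraph V} (hor : IsOrientation G D)
    (s : Set V) : IsOrientation (G.induce s) (fun a b => D a b) :=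
  ⟨fun a b h => hor.1 a b h, fun a b h => hor.2 a b h⟩

lemma StrongAvoid.strongConn_induce {v : V} (hD : StrongAvoid D v) :
    StrongConn (fun a b : {u : V | u ≠ v} => D a b) := by
  suffices ∀ {a b : V}, ReflTransGen (fun x y => D x y ∧ x ≠ v ∧ y ≠ v) a b →
      ∀ (ha : a ≠ v) (hb : b ≠ v),
        ReflTransGen (fun x y : {u : V | u ≠ v} => D x y) ⟨a, ha⟩ ⟨b, hb⟩ from
    fun a b => this (hD a b a.2 b.2) a.2 b.2
  intro a b h ha
  induction h with
  | refl => exact fun _ => .refl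
  | tail _ hcd ih => exact fun _ => (ih hcd.2.1).tail hcd.1

end

/-- Necessity in Thomassen's theorem: if a finite graph has a 2-vertex-connected
orientation then it is 4-edge-connected and all vertex-deleted subgraphs are
2-edge-connected. -/
theorem stmt_2 {V : Type*} [Fintype V] (G : SimpleGraph V) (D : V → V → Prop)
    (hor : IsOrientation G D) (h2 : TwoVC D) :
    EdgeConn G 4 ∧ ∀ v : V, EdgeConn (SimpleGraph.induce {u : V | u ≠ v} G) 2 :=
  ⟨hor.edgeConn_of_arcConn h2.arcConn_two, fun v =>
    (hor.induce _).edgeConn_of_arcConn (h2.2.2 v).strongConn_induce.arcConn_one⟩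
end

section
/- Let G and H be finite graphs, v a vertex of G, and let G' be obtained from G by blowing up v into H, i.e., deleting v, adding a disjoint copy of H, and replacing each edge wv of G by an edge from w to some vertex of H. If both G and H are k-edge-connected, then G' is k-edge-connected. -/
open Relation

/-- Edge-connectivity of the sub-multigraph of a multigraph (edges `E` with
endpoints `ends`) induced on the vertex set `S`: `S` has at least two vertices and
every cut of the induced multigraph has at least `k` crossing edges. -/
def SEdgeConnOn {V E : Type*} (ends : E → Sym2 V) (S : Set V) (k : ℕ) : Prop :=
  2 ≤ Nat.card S ∧ ∀ X : Set V, (X ∩ S).Nonempty → ¬ S ⊆ X →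
    k ≤ Nat.card {e : E // (∀ x ∈ ends e, x ∈ S) ∧
      ∃ a b, ends e = s(a, b) ∧ a ∈ X ∩ S ∧ b ∈ S \ X}


/-!
Every cut `X` of the blown-up graph is read off from a cut of `G` or of `H`. If `X` separates
two vertices of `H`, the edges of `H` crossing `X ∩ H` already cross `X`. Otherwise `H` lies
entirely on one side of `X`; contracting `H` back to `v` turns `X` into a cut of `G`, and each
edge of `G` crossing that cut becomes an edge crossing `X`, wherever it was reattached in `H`.
-/

open Function Set

section Cuts

variable {V V' E E' : Type*}

def cutEdges (ends : E → Sym2 V) (X : Set V) : Set E :=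
  {e | ∃ a b, ends e = s(a, b) ∧ a ∈ X ∧ b ∉ X}

theorem sEdgeConnOn_univ_iff (ends : E → Sym2 V) (k : ℕ) :
    SEdgeConnOn ends univ k ↔
      2 ≤ Nat.card V ∧
        ∀ X : Set V, X.Nonempty → X ≠ univ → k ≤ Nat.card (cutEdges ends X) := by
  simp only [SEdgeConnOn, cutEdges, Nat.card_univ, inter_univ, univ_subset_iff, mem_univ,
    implies_true, mem_sdiff, true_and, ← ne_eq, coe_ofPred]

theorem card_cutEdges_le_of_map [Finite E'] (ends : E → Sym2 V) (ends' : E' → Sym2 V')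
    (ι : E → E') (hι : Injective ι) (φ : E → V → V')
    (hends : ∀ e, ends' (ι e) = (ends e).map (φ e)) {X : Set V'} {Y : Set V}
    (hY : ∀ e, φ e ⁻¹' X = Y) :
    Nat.card (cutEdges ends Y) ≤ Nat.card (cutEdges ends' X) := by
  have hmaps : MapsTo ι (cutEdges ends Y) (cutEdges ends' X) := by
    rintro e ⟨a, b, hab, ha, hb⟩
    rw [← hY e] at ha hb
    exact ⟨φ e a, φ e b, by rw [hends, hab, Sym2.map_mk], ha, hb⟩
  exact Nat.card_le_card_of_injective _ ((hmaps.restrict_inj).2 hι.injOn)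

end Cuts

theorem nonempty_preimage_and_ne_univ_of_forall_exists_mem_iff {α β : Type*} {f : α → β}
    {X : Set β} (hf : ∀ b, ∃ a, (f a ∈ X ↔ b ∈ X)) (hX : X.Nonempty) (hXu : X ≠ univ) :
    (f ⁻¹' X).Nonempty ∧ f ⁻¹' X ≠ univ := by
  obtain ⟨b, hb⟩ := hX
  obtain ⟨b', hb'⟩ := ne_univ_iff_exists_notMem X |>.1 hXu
  obtain ⟨a, ha⟩ := hf b
  obtain ⟨a', ha'⟩ := hf b'
  exact ⟨⟨a, ha.2 hb⟩, ne_univ_iff_exists_notMem _ |>.2 ⟨a', fun h => hb' (ha'.1 h)⟩⟩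

section BlowUp

variable {V W : Type*}

open Classical in
/-- The vertex map of the blow-up of `v`, for an edge reattached at the vertex `w` of `H`. -/
noncomputable def blowUpMap (v : V) (w : W) : V → {u : V // u ≠ v} ⊕ W :=
  fun u => if h : u = v then Sum.inr w else Sum.inl ⟨u, h⟩

theorem blowUpMap_preimage_eq (v : V) {X : Set ({u : V // u ≠ v} ⊕ W)}
    (hX : ∀ w w' : W, Sum.inr w ∈ X ↔ Sum.inr w' ∈ X) (w w' : W) :
    blowUpMap v w ⁻¹' X = blowUpMap v w' ⁻¹' X := by
  ext u
  by_cases h : u = v <;> simp [blowUpMap, h, hX w w']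

theorem exists_blowUpMap_mem_iff (v : V) {X : Set ({u : V // u ≠ v} ⊕ W)}
    (hX : ∀ w w' : W, Sum.inr w ∈ X ↔ Sum.inr w' ∈ X) (w : W)
    (x : {u : V // u ≠ v} ⊕ W) :
    ∃ u, (blowUpMap v w u ∈ X ↔ x ∈ X) := by
  rcases x with u | w'
  · exact ⟨u, by simp [blowUpMap, u.2]⟩
  · exact ⟨v, by simp [blowUpMap, hX w w']⟩

end BlowUp

open Classical in
theorem stmt_4_general {V W EG EH : Type*} [Finite V] [Finite W] [Finite EG] [Finite EH]
    (endsG : EG → Sym2 V) (endsH : EH → Sym2 W) (v : V) (att : EG → W)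
    (k : ℕ)
    (hG : SEdgeConnOn endsG Set.univ k) (hH : SEdgeConnOn endsH Set.univ k) :
    SEdgeConnOn
      (Sum.elim
        (fun e : EG => (endsG e).map
          (fun u : V => if h : u = v then Sum.inr (att e) else Sum.inl (⟨u, h⟩ : {u : V // u ≠ v})))
        (fun e : EH => (endsH e).map (Sum.inr : W → ({u : V // u ≠ v}) ⊕ W)))
      Set.univ k := by
  rw [sEdgeConnOn_univ_iff] at hG hH ⊢
  refine ⟨by rw [Nat.card_sum]; omega, fun X hX hXu => ?_⟩
  by_cases hsplit : (Sum.inr ⁻¹' X : Set W).Nonempty ∧ Sum.inr ⁻¹' X ≠ univ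
  · exact (hH.2 _ hsplit.1 hsplit.2).trans
      (card_cutEdges_le_of_map _ _ Sum.inr Sum.inr_injective (fun _ => Sum.inr) (fun _ => rfl)
        fun _ => rfl)
  · have hconst : ∀ w w' : W, Sum.inr w ∈ X ↔ Sum.inr w' ∈ X := by
      rw [not_and_or, not_nonempty_iff_eq_empty, not_ne_iff] at hsplit
      intro w w'
      rcases hsplit with h | h <;> simp only [← mem_preimage, h, mem_empty_iff_false, mem_univ]
    obtain ⟨w₀⟩ : Nonempty W := Nat.card_pos_iff.1 (by omega) |>.1
    obtain ⟨hY, hYu⟩ := nonempty_preimage_and_ne_univ_of_forall_exists_mem_iff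
      (exists_blowUpMap_mem_iff v hconst w₀) hX hXu
    exact (hG.2 _ hY hYu).trans
      (card_cutEdges_le_of_map _ _ Sum.inl Sum.inl_injective (fun e => blowUpMap v (att e))
        (fun _ => rfl) fun e => blowUpMap_preimage_eq v hconst (att e) w₀)

open Classical in
/-- Blowing up a vertex v of a k-edge-connected multigraph G into a
k-edge-connected multigraph H yields a k-edge-connected multigraph. The new graph
has vertices ({u : V // u ≠ v}) ⊕ W; an edge of G whose endpoint is v is
reattached to the vertex (att e) of H. -/
theorem stmt_4 {V W EG EH : Type*} [Finite V] [Finite W] [Finite EG] [Finite EH]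
    (endsG : EG → Sym2 V) (endsH : EH → Sym2 W) (v : V) (att : EG → W)
    (hloop : ∀ e : EG, endsG e ≠ s(v, v)) (k : ℕ)
    (hG : SEdgeConnOn endsG Set.univ k) (hH : SEdgeConnOn endsH Set.univ k) :
    SEdgeConnOn
      (Sum.elim
        (fun e : EG => (endsG e).map
          (fun u : V => if h : u = v then Sum.inr (att e) else Sum.inl (⟨u, h⟩ : {u : V // u ≠ v})))
        (fun e : EH => (endsH e).map (Sum.inr : W → ({u : V // u ≠ v}) ⊕ W)))
      Set.univ k :=
  stmt_4_general endsG endsH v att k hG hH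
end

section
/- Let G be a 4-edge-connected graph, T ⊆ V(G) with G − v 2-edge-connected for all v ∈ T, and let H be obtained from G by blowing up every vertex v ∉ T into a double cycle C_v on max{3, ⌈deg_G(v)/2⌉} vertices so that every vertex of C_v is incident to at most 2 non-C_v edges. Then H is 4-edge-connected and H − w is 2-edge-connected for every vertex w of H. -/
open Relation

/-- The size of the double cycle replacing vertex v: max(3, ⌈deg(v)/2⌉). -/
def cycSize {V : Type*} [Fintype V] (G : SimpleGraph V) [DecidableRel G.Adj] (v : V) : ℕ :=
  max 3 ((G.degree v + 1) / 2)

instance {V : Type*} [Fintype V] (G : SimpleGraph V) [DecidableRel G.Adj] (v : V) :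
    NeZero (cycSize G v) :=
  ⟨Nat.pos_iff_ne_zero.mp (lt_of_lt_of_le (by norm_num) (le_max_left 3 _))⟩

/-- Vertex set of the blown-up graph H: the vertices in T, together with a copy of
Fin (cycSize G u) (the double cycle C_u) for each vertex u ∉ T. -/
def BlowVert {V : Type*} [Fintype V] (G : SimpleGraph V) [DecidableRel G.Adj]
    (T : Set V) : Type _ :=
  {v : V // v ∈ T} ⊕ (Σ u : {v : V // v ∉ T}, Fin (cycSize G u.1))

/-- Edge set of H: the edges of G (reattached) together with the double-cycle edges. -/
def BlowEdge {V : Type*} [Fintype V] (G : SimpleGraph V) [DecidableRel G.Adj]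
    (T : Set V) : Type _ :=
  G.edgeSet ⊕ (Σ u : {v : V // v ∉ T}, Fin (cycSize G u.1) × Fin 2)

/-- Endpoints of the edges of H: an endpoint u of an original edge e is kept if
u ∈ T and otherwise reattached to the vertex (att _ e) of the double cycle C_u;
the cycle edges join consecutive vertices i and i+1 (two parallel copies each). -/
def blowEnds {V : Type*} [Fintype V] (G : SimpleGraph V) [DecidableRel G.Adj]
    (T : Set V) [DecidablePred (· ∈ T)]
    (att : (u : {v : V // v ∉ T}) → G.edgeSet → Fin (cycSize G u.1)) :
    BlowEdge G T → Sym2 (BlowVert G T)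
  | Sum.inl e => e.1.map (fun u : V =>
      if h : u ∈ T then Sum.inl ⟨u, h⟩ else Sum.inr ⟨⟨u, h⟩, att ⟨u, h⟩ e⟩)
  | Sum.inr c => s(Sum.inr ⟨c.1, c.2.1⟩, Sum.inr ⟨c.1, c.2.1 + 1⟩)


open Fin.NatCast Fin.CommRing

lemma natCross (g : ℕ → Prop) (h0 : g 0) {k : ℕ} (hk : ¬ g k) :
    ∃ m, g m ∧ ¬ g (m + 1) := by
  induction k with
  | zero => exact absurd h0 hk
  | succ k ih =>
    by_cases h : g k
    · exact ⟨k, h, hk⟩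
    · exact ih h

lemma natCross2 (g : ℕ → Prop) : ∀ {q p : ℕ}, g p → ¬ g q → p < q →
    ∃ m, p ≤ m ∧ m < q ∧ g m ∧ ¬ g (m + 1) := by
  intro q
  induction q with
  | zero => intro p _ _ h; omega
  | succ q ih =>
    intro p hp hq hlt
    rcases eq_or_lt_of_le (Nat.lt_succ_iff.mp hlt) with h | h
    · exact ⟨p, le_refl _, by omega, hp, h ▸ hq⟩
    · by_cases hgq : g q
      · exact ⟨q, by omega, by omega, hgq, hq⟩
      · obtain ⟨m, h1, h2, h3⟩ := ih hp hgq h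
        exact ⟨m, h1, by omega, h3⟩

lemma natPath (g : ℕ → Prop) {p q r : ℕ} (hp : p < r) (hq : q < r)
    (hgp : g p) (hgq : ¬ g q) : ∃ m, m + 1 < r ∧ ¬ (g m ↔ g (m + 1)) := by
  rcases lt_trichotomy p q with h | h | h
  · obtain ⟨m, h1, h2, h3, h4⟩ := natCross2 g hgp hgq h
    exact ⟨m, by omega, by tauto⟩
  · exact absurd hgp (h ▸ hgq)
  · obtain ⟨m, h1, h2, h3, h4⟩ := natCross2 (fun m => ¬ g m) hgq (not_not_intro hgp) h
    exact ⟨m, by omega, by tauto⟩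

lemma finCast_succ {n : ℕ} [NeZero n] (a : Fin n) (m : ℕ) :
    a + ((m + 1 : ℕ) : Fin n) = (a + (m : ℕ)) + 1 := by
  push_cast
  ring

lemma finDownCross {n : ℕ} [NeZero n] (f : Fin n → Prop) {c d : Fin n}
    (hc : f c) (hd : ¬ f d) : ∃ i : Fin n, f i ∧ ¬ f (i + 1) := by
  obtain ⟨m, hm, hm'⟩ := natCross (fun m => f (c + (m : ℕ))) (by simpa using hc)
    (k := (d - c).val) (by simpa [Fin.cast_val_eq_self, show c + (d - c) = d from by ring] using hd)
  rw [finCast_succ] at hm'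
  exact ⟨c + (m : ℕ), hm, hm'⟩

lemma finTwoCross {n : ℕ} [NeZero n] (f : Fin n → Prop) {a b : Fin n}
    (ha : f a) (hb : ¬ f b) :
    ∃ i j : Fin n, i ≠ j ∧ (f i ∧ ¬ f (i + 1)) ∧ (¬ f j ∧ f (j + 1)) := by
  obtain ⟨i, hi1, hi2⟩ := finDownCross f ha hb
  obtain ⟨j, hj1, hj2⟩ := finDownCross (fun x => ¬ f x) hb (not_not_intro ha)
  exact ⟨i, j, fun h => hj1 (h ▸ hi1), ⟨hi1, hi2⟩, ⟨hj1, not_not.mp hj2⟩⟩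

lemma finOneCross {n : ℕ} [NeZero n] (f : Fin n → Prop) {a b : Fin n}
    (ha : f a) (hb : ¬ f b) : ∃ i : Fin n, ¬ (f i ↔ f (i + 1)) := by
  obtain ⟨i, _, _, h1, _⟩ := finTwoCross f ha hb
  exact ⟨i, by tauto⟩

lemma finShiftNe {n : ℕ} [NeZero n] (i0 : Fin n) {k : ℕ} (h1 : 0 < k) (h2 : k < n) :
    i0 + (k : ℕ) ≠ i0 := by
  intro h
  have h3 : ((k : ℕ) : Fin n) = 0 := by
    have h' : i0 + ((k:ℕ) : Fin n) = i0 + 0 := by rw [add_zero]; exact h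
    exact add_left_cancel h' 
  have := congrArg Fin.val h3
  rw [Fin.val_cast_of_lt h2] at this
  simp at this
  omega

lemma finPathCross {n : ℕ} [NeZero n] (f : Fin n → Prop) (i0 : Fin n) {a b : Fin n}
    (ha : f a) (hb : ¬ f b) (ha0 : a ≠ i0) (hb0 : b ≠ i0) :
    ∃ i : Fin n, i ≠ i0 ∧ i + 1 ≠ i0 ∧ ¬ (f i ↔ f (i + 1)) := by
  have hn : 1 ≤ n := Nat.pos_of_ne_zero (NeZero.ne n)
  have hfull : ∀ c : Fin n, c ≠ i0 → ∃ p : ℕ, p < n - 1 ∧ i0 + 1 + (p : ℕ) = c := by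
    intro c hc
    refine ⟨(c - (i0 + 1)).val, ?_, by rw [Fin.cast_val_eq_self]; ring⟩
    have hlt : (c - (i0 + 1)).val < n := (c - (i0 + 1)).isLt
    by_contra hcon
    have hval : (c - (i0 + 1)).val = n - 1 := by omega
    have hrw : c - (i0 + 1) = (((n - 1 : ℕ)) : Fin n) := by
      apply Fin.ext
      rw [Fin.val_cast_of_lt (by omega)]
      exact hval
    have h2 : ((1 + (n - 1) : ℕ) : Fin n) = 0 := by
      rw [show 1 + (n - 1) = n by omega]
      exact Fin.natCast_self n
    push_cast at h2
    apply hc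
    have : c = i0 + 1 + (c - (i0 + 1)) := by ring
    rw [this, hrw, add_assoc, h2, add_zero]
  obtain ⟨p, hp, hpe⟩ := hfull a ha0
  obtain ⟨q, hq, hqe⟩ := hfull b hb0
  obtain ⟨m, hm, hmx⟩ := natPath (fun m => f (i0 + 1 + (m : ℕ))) hp hq
    (by simpa [hpe] using ha) (by simpa [hqe] using hb)
  refine ⟨i0 + 1 + (m : ℕ), ?_, ?_, ?_⟩
  · have : i0 + 1 + (m : ℕ) = i0 + ((1 + m : ℕ) : Fin n) := by push_cast; ring
    rw [this]
    exact finShiftNe i0 (by omega) (by omega)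
  · have : i0 + 1 + (m : ℕ) + 1 = i0 + ((1 + (m + 1) : ℕ) : Fin n) := by push_cast; ring
    rw [this]
    exact finShiftNe i0 (by omega) (by omega)
  · rwa [show i0 + 1 + ((m + 1 : ℕ) : Fin n) = i0 + 1 + (m : ℕ) + 1 from finCast_succ _ m] at hmx


lemma cardNe {α : Type*} [Finite α] (w : α) :
    Nat.card {u : α // u ≠ w} + 1 = Nat.card α := by
  classical
  have h1 := Nat.card_congr (Equiv.sumCompl (fun u : α => u = w))
  rw [Nat.card_sum] at h1
  have h2 : Nat.card {u : α // u = w} = 1 :=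
    Nat.card_eq_one_iff_unique.mpr
      ⟨⟨fun a b => Subtype.ext (a.2.trans b.2.symm)⟩, ⟨⟨w, rfl⟩⟩⟩
  have h3 : Nat.card {u : α // ¬ u = w} = Nat.card {u : α // u ≠ w} := rfl
  omega

lemma leCardOfInj {α γ : Type*} [Finite γ] (k : ℕ) (f : α → γ)
    (hf : Function.Injective f) (hk : k ≤ Nat.card α) : k ≤ Nat.card γ :=
  hk.trans (Nat.card_le_card_of_injective f hf)

example : Nat.card (Fin 2 × Fin 2) = 4 := by simp [Nat.card_eq_fintype_card]
example : Nat.card (Fin 2) = 2 := by simp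

section Blow
variable {V : Type*} [Fintype V] (G : SimpleGraph V) [DecidableRel G.Adj]
  (T : Set V) [DecidablePred (· ∈ T)]
  (att : (u : {v : V // v ∉ T}) → G.edgeSet → Fin (cycSize G u.1))

instance : Finite (BlowVert G T) := by unfold BlowVert; infer_instance
instance : Finite (BlowEdge G T) := by unfold BlowEdge; infer_instance

def bembV (u : V) : BlowVert G T :=
  if h : u ∈ T then Sum.inl ⟨u, h⟩ else Sum.inr ⟨⟨u, h⟩, 0⟩

lemma bembV_inj : Function.Injective (bembV G T) := by
  intro u v h
  have := congrArg (fun x : BlowVert G T => match x with | Sum.inl a => a.1 | Sum.inr a => a.1.1) h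
  by_cases h1 : u ∈ T <;> by_cases h2 : v ∈ T <;> simpa [bembV, h1, h2] using this

def bemb (e : G.edgeSet) (u : V) : BlowVert G T :=
  if h : u ∈ T then Sum.inl ⟨u, h⟩ else Sum.inr ⟨⟨u, h⟩, att ⟨u, h⟩ e⟩

lemma blowEnds_inl (e : G.edgeSet) :
    blowEnds G T att (Sum.inl e) = Sym2.map (bemb G T att e) e.1 := rfl

def Yset (sel : (u : {v : V // v ∉ T}) → Fin (cycSize G u.1))
    (X : Set (BlowVert G T)) : Set V :=
  {u : V | if h : u ∈ T then Sum.inl ⟨u, h⟩ ∈ X else Sum.inr ⟨⟨u, h⟩, sel ⟨u, h⟩⟩ ∈ X}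

lemma bemb_mem_iff (sel : (u : {v : V // v ∉ T}) → Fin (cycSize G u.1))
    (X : Set (BlowVert G T))
    (C : (u : {v : V // v ∉ T}) → Fin (cycSize G u.1) → Prop)
    (hns : ∀ u i, C u i →
      ((Sum.inr ⟨u, i⟩ : BlowVert G T) ∈ X ↔ (Sum.inr ⟨u, sel u⟩ : BlowVert G T) ∈ X))
    (e : G.edgeSet) (u : V) (hc : ∀ h : u ∉ T, C ⟨u, h⟩ (att ⟨u, h⟩ e)) :
    (bemb G T att e u ∈ X ↔ u ∈ Yset G T sel X) := by
  unfold Yset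
  by_cases h : u ∈ T
  · simp [h, bemb]; exact Iff.rfl
  · rw [show bemb G T att e u = Sum.inr ⟨⟨u, h⟩, att ⟨u, h⟩ e⟩ from dif_neg h]
    simp only [Set.mem_setOf_eq, dif_neg h]
    exact hns ⟨u, h⟩ _ (hc h)

lemma cycEdgeMem (X S : Set (BlowVert G T)) (u : {v : V // v ∉ T})
    (i : Fin (cycSize G u.1)) (c : Fin 2)
    (hS : (Sum.inr ⟨u, i⟩ : BlowVert G T) ∈ S)
    (hS' : (Sum.inr ⟨u, i + 1⟩ : BlowVert G T) ∈ S)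
    (hx : ¬ ((Sum.inr ⟨u, i⟩ : BlowVert G T) ∈ X ↔ (Sum.inr ⟨u, i + 1⟩ : BlowVert G T) ∈ X)) :
    (∀ x ∈ blowEnds G T att (Sum.inr ⟨u, (i, c)⟩), x ∈ S) ∧
      ∃ a b, blowEnds G T att (Sum.inr ⟨u, (i, c)⟩) = s(a, b) ∧ a ∈ X ∩ S ∧ b ∈ S \ X := by
  have hends : blowEnds G T att (Sum.inr ⟨u, (i, c)⟩) =
      s(Sum.inr ⟨u, i⟩, Sum.inr ⟨u, i + 1⟩) := rfl
  constructor
  · rw [hends]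
    intro x hx'
    rcases Sym2.mem_iff.mp hx' with h | h <;> subst h <;> assumption
  · by_cases hX : (Sum.inr ⟨u, i⟩ : BlowVert G T) ∈ X
    · exact ⟨_, _, hends, ⟨hX, hS⟩, ⟨hS', fun h => hx ⟨fun _ => h, fun _ => hX⟩⟩⟩
    · refine ⟨Sum.inr ⟨u, i + 1⟩, Sum.inr ⟨u, i⟩, ?_, ⟨?_, hS'⟩, ⟨hS, hX⟩⟩
      · rw [hends]; exact Sym2.eq_swap
      · by_contra h
        exact hx ⟨fun h' => absurd h' hX, fun h' => absurd h' h⟩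

lemma cycleCutTwo (X S : Set (BlowVert G T)) (u : {v : V // v ∉ T})
    (i : Fin (cycSize G u.1))
    (hS : (Sum.inr ⟨u, i⟩ : BlowVert G T) ∈ S)
    (hS' : (Sum.inr ⟨u, i + 1⟩ : BlowVert G T) ∈ S)
    (hx : ¬ ((Sum.inr ⟨u, i⟩ : BlowVert G T) ∈ X ↔ (Sum.inr ⟨u, i + 1⟩ : BlowVert G T) ∈ X)) :
    2 ≤ Nat.card {e : BlowEdge G T // (∀ x ∈ blowEnds G T att e, x ∈ S) ∧
      ∃ a b, blowEnds G T att e = s(a, b) ∧ a ∈ X ∩ S ∧ b ∈ S \ X} := by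
  have hf : Function.Injective (fun c : Fin 2 =>
      (⟨Sum.inr ⟨u, (i, c)⟩, cycEdgeMem G T att X S u i c hS hS' hx⟩ :
        {e : BlowEdge G T // (∀ x ∈ blowEnds G T att e, x ∈ S) ∧
          ∃ a b, blowEnds G T att e = s(a, b) ∧ a ∈ X ∩ S ∧ b ∈ S \ X})) := by
    intro c1 c2 h
    have h0 := congrArg Subtype.val h
    injection h0 with h'
    have h2 := eq_of_heq (Sigma.mk.inj_iff.mp h').2
    exact (Prod.ext_iff.mp h2).2
  have := Nat.card_le_card_of_injective _ hf
  simpa using this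

lemma cycleCutFour (X S : Set (BlowVert G T)) (u : {v : V // v ∉ T})
    {i j : Fin (cycSize G u.1)} (hij : i ≠ j)
    (hS : ∀ i' : Fin (cycSize G u.1), (Sum.inr ⟨u, i'⟩ : BlowVert G T) ∈ S)
    (hi : (Sum.inr ⟨u, i⟩ : BlowVert G T) ∈ X ∧ (Sum.inr ⟨u, i + 1⟩ : BlowVert G T) ∉ X)
    (hj : (Sum.inr ⟨u, j⟩ : BlowVert G T) ∉ X ∧ (Sum.inr ⟨u, j + 1⟩ : BlowVert G T) ∈ X) :
    4 ≤ Nat.card {e : BlowEdge G T // (∀ x ∈ blowEnds G T att e, x ∈ S) ∧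
      ∃ a b, blowEnds G T att e = s(a, b) ∧ a ∈ X ∩ S ∧ b ∈ S \ X} := by
  have pf : ∀ p : Fin 2 × Fin 2,
      (∀ x ∈ blowEnds G T att (Sum.inr ⟨u, (if p.1 = 0 then i else j, p.2)⟩), x ∈ S) ∧
      ∃ a b, blowEnds G T att (Sum.inr ⟨u, (if p.1 = 0 then i else j, p.2)⟩) = s(a, b) ∧
        a ∈ X ∩ S ∧ b ∈ S \ X := by
    intro p
    by_cases hp : p.1 = 0
    · simp only [hp, if_pos]
      exact cycEdgeMem G T att X S u i p.2 (hS i) (hS (i + 1))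
        (fun h => hi.2 (h.mp hi.1))
    · simp only [if_neg hp]
      exact cycEdgeMem G T att X S u j p.2 (hS j) (hS (j + 1))
        (fun h => hj.1 (h.mpr hj.2))
  have hf : Function.Injective (fun p : Fin 2 × Fin 2 =>
      (⟨Sum.inr ⟨u, (if p.1 = 0 then i else j, p.2)⟩, pf p⟩ :
        {e : BlowEdge G T // (∀ x ∈ blowEnds G T att e, x ∈ S) ∧
          ∃ a b, blowEnds G T att e = s(a, b) ∧ a ∈ X ∩ S ∧ b ∈ S \ X})) := by
    intro p q h
    have h0 := congrArg Subtype.val h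
    injection h0 with hs
    have h' := eq_of_heq (Sigma.mk.inj_iff.mp hs).2
    obtain ⟨h1, h2⟩ := Prod.ext_iff.mp h' 
    have h3 : p.1 = q.1 := by
      by_cases hp : p.1 = 0 <;> by_cases hq : q.1 = 0
      · exact hp.trans hq.symm
      · rw [if_pos hp, if_neg hq] at h1; exact absurd h1 hij
      · rw [if_neg hp, if_pos hq] at h1; exact absurd h1.symm hij
      · apply Fin.ext
        have h4 := p.1.isLt
        have h5 := q.1.isLt
        have h6 : p.1.val ≠ 0 := fun hh => hp (Fin.ext hh)
        have h7 : q.1.val ≠ 0 := fun hh => hq (Fin.ext hh)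
        omega
    exact Prod.ext h3 h2
  have := Nat.card_le_card_of_injective _ hf
  simpa using this

end Blow

lemma cardSplit {α : Type*} [Finite α] (P Q : α → Prop) (k m : ℕ)
    (hk : k ≤ Nat.card {a : α // P a}) (hm : Nat.card {a : α // Q a} ≤ m) :
    k - m ≤ Nat.card {a : α // P a ∧ ¬ Q a} := by
  classical
  have hf : Function.Injective (fun a : {a : α // P a} =>
      if h : Q a.1 then (Sum.inr ⟨a.1, h⟩ : {a : α // P a ∧ ¬ Q a} ⊕ {a : α // Q a})
      else Sum.inl ⟨a.1, a.2, h⟩) := by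
    intro a b hab
    dsimp only at hab
    apply Subtype.ext
    by_cases ha : Q a.1 <;> by_cases hb : Q b.1
    · rw [dif_pos ha, dif_pos hb] at hab
      have h2 := Sum.inr.inj hab
      exact congrArg (fun z : {a : α // Q a} => z.val) h2
    · rw [dif_pos ha, dif_neg hb] at hab; exact (Sum.inr_ne_inl hab).elim
    · rw [dif_neg ha, dif_pos hb] at hab; exact (Sum.inl_ne_inr hab).elim
    · rw [dif_neg ha, dif_neg hb] at hab
      have h2 := Sum.inl.inj hab
      exact congrArg (fun z : {a : α // P a ∧ ¬ Q a} => z.val) h2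
  have := Nat.card_le_card_of_injective _ hf
  rw [Nat.card_sum] at this
  omega

section Blow2
variable {V : Type*} [Fintype V] {G : SimpleGraph V} [DecidableRel G.Adj]
  {T : Set V} [DecidablePred (· ∈ T)]

lemma blow_inr_inj {u u' : {v : V // v ∉ T}} {i : Fin (cycSize G u.1)}
    {i' : Fin (cycSize G u'.1)}
    (h : (Sum.inr ⟨u, i⟩ : BlowVert G T) = Sum.inr ⟨u', i'⟩) : u = u' ∧ HEq i i' := by
  injection h with h'
  exact Sigma.mk.inj_iff.mp h'

lemma blow_inr_ne {u : {v : V // v ∉ T}} {i i' : Fin (cycSize G u.1)} (hne : i ≠ i') :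
    (Sum.inr ⟨u, i⟩ : BlowVert G T) ≠ Sum.inr ⟨u, i'⟩ :=
  fun h => hne (eq_of_heq (blow_inr_inj h).2)

lemma blow_inr_ne_inl {u : {v : V // v ∉ T}} {i : Fin (cycSize G u.1)}
    {t : {v : V // v ∈ T}} : (Sum.inr ⟨u, i⟩ : BlowVert G T) ≠ Sum.inl t :=
  fun h => Sum.inr_ne_inl h

lemma blow_inl_ne_inr {u : {v : V // v ∉ T}} {i : Fin (cycSize G u.1)}
    {t : {v : V // v ∈ T}} : (Sum.inl t : BlowVert G T) ≠ Sum.inr ⟨u, i⟩ :=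
  fun h => Sum.inl_ne_inr h

lemma cycSize_big (u : V) : 3 ≤ cycSize G u := le_max_left _ _

lemma fin_succ_ne {n : ℕ} [NeZero n] (hn : 2 ≤ n) (i : Fin n) : i + 1 ≠ i := by
  have := finShiftNe i (k := 1) one_pos hn
  simpa using this

end Blow2

section Blow3
variable {V : Type*} [Fintype V] (G : SimpleGraph V) [DecidableRel G.Adj]
  (T : Set V) [DecidablePred (· ∈ T)]

lemma mem_Yset_inl (sel : (u : {v : V // v ∉ T}) → Fin (cycSize G u.1))
    (X : Set (BlowVert G T)) (t : {v : V // v ∈ T}) :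
    t.1 ∈ Yset G T sel X ↔ (Sum.inl t : BlowVert G T) ∈ X := by
  unfold Yset
  rw [Set.mem_setOf_eq, dif_pos t.2]

lemma mem_Yset_inr (sel : (u : {v : V // v ∉ T}) → Fin (cycSize G u.1))
    (X : Set (BlowVert G T)) (u : {v : V // v ∉ T}) :
    u.1 ∈ Yset G T sel X ↔ (Sum.inr ⟨u, sel u⟩ : BlowVert G T) ∈ X := by
  unfold Yset
  rw [Set.mem_setOf_eq, dif_neg u.2]

end Blow3

set_option maxHeartbeats 2000000

/-- If G is 4-edge-connected and G - v is 2-edge-connected for all v ∈ T, and H is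
obtained from G by blowing up every vertex u ∉ T into a double cycle on
max(3, ⌈deg(u)/2⌉) vertices so that every cycle vertex is incident to at most 2
non-cycle edges, then H is 4-edge-connected and H - w is 2-edge-connected for
every vertex w of H. -/
theorem stmt_10 {V : Type*} [Fintype V] (G : SimpleGraph V) [DecidableRel G.Adj]
    (T : Set V) [DecidablePred (· ∈ T)]
    (hG4 : SEdgeConnOn (fun e : G.edgeSet => e.1) Set.univ 4)
    (hGT : ∀ v ∈ T, SEdgeConnOn (fun e : G.edgeSet => e.1) {u : V | u ≠ v} 2)
    (att : (u : {v : V // v ∉ T}) → G.edgeSet → Fin (cycSize G u.1))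
    (hatt : ∀ (u : {v : V // v ∉ T}) (i : Fin (cycSize G u.1)),
      Nat.card {e : G.edgeSet //
        (Sum.inr ⟨u, i⟩ : BlowVert G T) ∈ blowEnds G T att (Sum.inl e)} ≤ 2) :
    SEdgeConnOn (blowEnds G T att) Set.univ 4 ∧
      ∀ w : BlowVert G T, SEdgeConnOn (blowEnds G T att) {u | u ≠ w} 2 := by
  classical
  obtain ⟨hG2, hG4'⟩ := hG4
  have hVcard : 2 ≤ Nat.card V := by
    rwa [Nat.card_coe_set_eq, Set.ncard_univ] at hG2
  have hW3 : 3 ≤ Nat.card (BlowVert G T) := by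
    by_cases hT : ∃ t, t ∈ T
    · obtain ⟨t, ht⟩ := hT
      have h2 : 2 ≤ Nat.card {u : V // u ≠ t} := (hGT t ht).1
      have h3 : 3 ≤ Nat.card V := by have := cardNe t; omega
      exact le_trans h3 (Nat.card_le_card_of_injective _ (bembV_inj G T))
    · push_neg at hT
      have hpos : 0 < Nat.card V := by omega
      obtain ⟨u⟩ := (Nat.card_pos_iff.mp hpos).1
      have hu : u ∉ T := hT u
      have hinj : Function.Injective (fun k : Fin 3 =>
          (Sum.inr ⟨⟨u, hu⟩, Fin.castLE (cycSize_big u) k⟩ : BlowVert G T)) := by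
        intro k1 k2 h
        exact Fin.castLE_injective _ (eq_of_heq (blow_inr_inj h).2)
      calc (3 : ℕ) = Nat.card (Fin 3) := by simp
        _ ≤ Nat.card (BlowVert G T) := Nat.card_le_card_of_injective _ hinj
  constructor
  · constructor
    · rw [Nat.card_coe_set_eq, Set.ncard_univ]; omega
    · intro X hXne hXns
      by_cases hsplit : ∀ (u : {v : V // v ∉ T}) (i : Fin (cycSize G u.1)),
          ((Sum.inr ⟨u, i⟩ : BlowVert G T) ∈ X ↔
            (Sum.inr ⟨u, (0 : Fin (cycSize G u.1))⟩ : BlowVert G T) ∈ X)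
      · -- no cycle is split
        have hmem : ∀ (e : G.edgeSet) (v : V),
            (bemb G T att e v ∈ X ↔ v ∈ Yset G T (fun _ => 0) X) := fun e v =>
          bemb_mem_iff G T att _ X (fun _ _ => True) (fun u i _ => hsplit u i) e v
            (fun _ => trivial)
        obtain ⟨w', hw'⟩ := hXne
        have hw'X : w' ∈ X := hw'.1
        have hYne : ∃ y, y ∈ Yset G T (fun _ => 0) X := by
          rcases w' with s | ⟨u, i⟩
          · exact ⟨s.1, (mem_Yset_inl G T _ X s).mpr hw'X⟩
          · exact ⟨u.1, (mem_Yset_inr G T _ X u).mpr ((hsplit u i).mp hw'X)⟩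
        obtain ⟨y, hy⟩ := hYne
        rw [Set.not_subset] at hXns
        obtain ⟨w'', _, hw''X⟩ := hXns
        have hYprop : ∃ z, z ∉ Yset G T (fun _ => 0) X := by
          rcases w'' with s | ⟨u, i⟩
          · exact ⟨s.1, fun hz => hw''X ((mem_Yset_inl G T _ X s).mp hz)⟩
          · exact ⟨u.1, fun hz =>
              hw''X ((hsplit u i).mpr ((mem_Yset_inr G T _ X u).mp hz))⟩
        obtain ⟨z, hz⟩ := hYprop
        have h4 := hG4' (Yset G T (fun _ => 0) X) ⟨y, hy, trivial⟩
          (fun hsub => hz (hsub (Set.mem_univ z)))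
        have hmap : ∀ e : G.edgeSet,
            (∃ a b, (e : Sym2 V) = s(a, b) ∧
              a ∈ Yset G T (fun _ => 0) X ∩ Set.univ ∧
              b ∈ Set.univ \ Yset G T (fun _ => 0) X) →
            ((∀ x ∈ blowEnds G T att (Sum.inl e), x ∈ (Set.univ : Set (BlowVert G T))) ∧
             ∃ a b, blowEnds G T att (Sum.inl e) = s(a, b) ∧
               a ∈ X ∩ Set.univ ∧ b ∈ Set.univ \ X) := by
          rintro e ⟨a, b, hab, haY, hbY⟩
          refine ⟨fun x _ => trivial, bemb G T att e a, bemb G T att e b, ?_,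
            ⟨?_, trivial⟩, trivial, ?_⟩
          · rw [blowEnds_inl, hab, Sym2.map_pair_eq]
          · exact (hmem e a).mpr haY.1
          · exact fun hbX => hbY.2 ((hmem e b).mp hbX)
        exact leCardOfInj 4 (fun e => ⟨Sum.inl e.1, hmap e.1 e.2.2⟩)
          (fun e1 e2 h => Subtype.ext (Sum.inl.inj (congrArg Subtype.val h))) h4
      · -- some cycle is split
        push_neg at hsplit
        obtain ⟨u, i, hui⟩ := hsplit
        have hcross : ∃ i' j' : Fin (cycSize G u.1), i' ≠ j' ∧
            ((Sum.inr ⟨u, i'⟩ : BlowVert G T) ∈ X ∧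
              (Sum.inr ⟨u, i' + 1⟩ : BlowVert G T) ∉ X) ∧
            ((Sum.inr ⟨u, j'⟩ : BlowVert G T) ∉ X ∧
              (Sum.inr ⟨u, j' + 1⟩ : BlowVert G T) ∈ X) := by
          rcases hui with ⟨h1, h2⟩ | ⟨h1, h2⟩
          · exact finTwoCross (fun i' => (Sum.inr ⟨u, i'⟩ : BlowVert G T) ∈ X) h1 h2
          · exact finTwoCross (fun i' => (Sum.inr ⟨u, i'⟩ : BlowVert G T) ∈ X) h2 h1
        obtain ⟨i', j', hij, hi', hj'⟩ := hcross
        exact cycleCutFour G T att X Set.univ u hij (fun _ => trivial) hi' hj'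
  · intro w
    have hcardB : 2 ≤ Nat.card {u : BlowVert G T // u ≠ w} := by
      have := cardNe w; omega
    refine ⟨hcardB, ?_⟩
    intro X hXne hXns
    rw [Set.not_subset] at hXns
    obtain ⟨w'', hw''S, hw''X⟩ := hXns
    obtain ⟨w', hw'X, hw'S⟩ := hXne
    rcases w with t | ⟨u0, i0⟩
    · -- w = Sum.inl t
      by_cases hsplit : ∀ (u : {v : V // v ∉ T}) (i : Fin (cycSize G u.1)),
          ((Sum.inr ⟨u, i⟩ : BlowVert G T) ∈ X ↔
            (Sum.inr ⟨u, (0 : Fin (cycSize G u.1))⟩ : BlowVert G T) ∈ X)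
      · -- no cycle split
        have hmem : ∀ (e : G.edgeSet) (v : V),
            (bemb G T att e v ∈ X ↔ v ∈ Yset G T (fun _ => 0) X) := fun e v =>
          bemb_mem_iff G T att _ X (fun _ _ => True) (fun u i _ => hsplit u i) e v
            (fun _ => trivial)
        have hYne : ∃ y, y ∈ Yset G T (fun _ => 0) X ∩ {u : V | u ≠ t.1} := by
          rcases w' with s | ⟨u, i⟩
          · exact ⟨s.1, (mem_Yset_inl G T _ X s).mpr hw'X,
              fun hst => hw'S (congrArg Sum.inl (Subtype.ext hst))⟩
          · exact ⟨u.1, (mem_Yset_inr G T _ X u).mpr ((hsplit u i).mp hw'X),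
              fun h => u.2 (h ▸ t.2)⟩
        obtain ⟨y, hy⟩ := hYne
        have hYprop : ∃ z, z ≠ t.1 ∧ z ∉ Yset G T (fun _ => 0) X := by
          rcases w'' with s | ⟨u, i⟩
          · exact ⟨s.1, fun hst => hw''S (congrArg Sum.inl (Subtype.ext hst)),
              fun hz => hw''X ((mem_Yset_inl G T _ X s).mp hz)⟩
          · exact ⟨u.1, fun h => u.2 (h ▸ t.2), fun hz =>
              hw''X ((hsplit u i).mpr ((mem_Yset_inr G T _ X u).mp hz))⟩
        obtain ⟨z, hzt, hz⟩ := hYprop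
        have h2 := (hGT t.1 t.2).2 (Yset G T (fun _ => 0) X) ⟨y, hy.1, hy.2⟩
          (fun hsub => hz (hsub hzt))
        have hmap : ∀ e : G.edgeSet,
            ((∀ x ∈ (e : Sym2 V), x ∈ {u : V | u ≠ t.1}) ∧
             ∃ a b, (e : Sym2 V) = s(a, b) ∧
              a ∈ Yset G T (fun _ => 0) X ∩ {u : V | u ≠ t.1} ∧
              b ∈ {u : V | u ≠ t.1} \ Yset G T (fun _ => 0) X) →
            ((∀ x ∈ blowEnds G T att (Sum.inl e),
                x ∈ {x : BlowVert G T | x ≠ Sum.inl t}) ∧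
             ∃ a b, blowEnds G T att (Sum.inl e) = s(a, b) ∧
               a ∈ X ∩ {x : BlowVert G T | x ≠ Sum.inl t} ∧
               b ∈ {x : BlowVert G T | x ≠ Sum.inl t} \ X) := by
          rintro e ⟨hall, a, b, hab, haY, hbY⟩
          have hne' : ∀ v : V, v ≠ t.1 → bemb G T att e v ≠ Sum.inl t := by
            intro v hv hcontra
            by_cases h : v ∈ T
            · rw [show bemb G T att e v = Sum.inl ⟨v, h⟩ from dif_pos h] at hcontra
              have h2 := Sum.inl.inj hcontra
              exact hv (congrArg Subtype.val h2)
            · rw [show bemb G T att e v = Sum.inr ⟨⟨v, h⟩, att ⟨v, h⟩ e⟩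
                from dif_neg h] at hcontra
              exact blow_inr_ne_inl hcontra
          have hends : blowEnds G T att (Sum.inl e) =
              s(bemb G T att e a, bemb G T att e b) := by
            rw [blowEnds_inl, hab, Sym2.map_pair_eq]
          refine ⟨?_, bemb G T att e a, bemb G T att e b, hends,
            ⟨(hmem e a).mpr haY.1, hne' a haY.2⟩,
            hne' b hbY.1, fun hbX => hbY.2 ((hmem e b).mp hbX)⟩
          rw [hends]
          intro x hx
          rcases Sym2.mem_iff.mp hx with h | h <;> subst h
          · exact hne' a haY.2
          · exact hne' b hbY.1
        exact leCardOfInj 2 (fun e => ⟨Sum.inl e.1, hmap e.1 e.2⟩)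
          (fun e1 e2 h => Subtype.ext (Sum.inl.inj (congrArg Subtype.val h))) h2
      · -- some cycle split
        push_neg at hsplit
        obtain ⟨u, i, hui⟩ := hsplit
        have hcross : ∃ i' : Fin (cycSize G u.1),
            ¬ ((Sum.inr ⟨u, i'⟩ : BlowVert G T) ∈ X ↔
              (Sum.inr ⟨u, i' + 1⟩ : BlowVert G T) ∈ X) := by
          rcases hui with ⟨h1, h2⟩ | ⟨h1, h2⟩
          · exact finOneCross (fun i' => (Sum.inr ⟨u, i'⟩ : BlowVert G T) ∈ X) h1 h2
          · exact finOneCross (fun i' => (Sum.inr ⟨u, i'⟩ : BlowVert G T) ∈ X) h2 h1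
        obtain ⟨i', hi'⟩ := hcross
        exact cycleCutTwo G T att X {x : BlowVert G T | x ≠ Sum.inl t} u i'
          blow_inr_ne_inl blow_inr_ne_inl hi'
    · -- w = Sum.inr ⟨u0, i0⟩
      have hn2 : 2 ≤ cycSize G u0.1 := le_trans (by norm_num) (cycSize_big u0.1)
      have h10 : i0 + 1 ≠ i0 := fin_succ_ne hn2 i0
      set rep : (u : {v : V // v ∉ T}) → Fin (cycSize G u.1) := fun u =>
        if h : u0 = u then Fin.cast (congrArg (fun x => cycSize G x.1) h) (i0 + 1)
        else 0 with hrep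
      have hrepu0 : rep u0 = i0 + 1 := by
        rw [hrep]
        simp only [dif_pos rfl]
        apply Fin.ext
        rfl
      by_cases hsplit : ∀ (u : {v : V // v ∉ T}) (i : Fin (cycSize G u.1)),
          (Sum.inr ⟨u, i⟩ : BlowVert G T) ≠ Sum.inr ⟨u0, i0⟩ →
          ((Sum.inr ⟨u, i⟩ : BlowVert G T) ∈ X ↔
            (Sum.inr ⟨u, rep u⟩ : BlowVert G T) ∈ X)
      · -- no cycle split (avoiding the deleted vertex)
        have hmem : ∀ (e : G.edgeSet) (v : V),
            (∀ h : v ∉ T, (Sum.inr ⟨⟨v, h⟩, att ⟨v, h⟩ e⟩ : BlowVert G T) ≠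
              Sum.inr ⟨u0, i0⟩) →
            (bemb G T att e v ∈ X ↔ v ∈ Yset G T rep X) := fun e v hc =>
          bemb_mem_iff G T att rep X
            (fun u i => (Sum.inr ⟨u, i⟩ : BlowVert G T) ≠ Sum.inr ⟨u0, i0⟩)
            hsplit e v hc
        have hYne : ∃ y, y ∈ Yset G T rep X := by
          rcases w' with s | ⟨u, i⟩
          · exact ⟨s.1, (mem_Yset_inl G T _ X s).mpr hw'X⟩
          · exact ⟨u.1, (mem_Yset_inr G T _ X u).mpr ((hsplit u i hw'S).mp hw'X)⟩
        obtain ⟨y, hy⟩ := hYne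
        have hYprop : ∃ z, z ∉ Yset G T rep X := by
          rcases w'' with s | ⟨u, i⟩
          · exact ⟨s.1, fun hz => hw''X ((mem_Yset_inl G T _ X s).mp hz)⟩
          · exact ⟨u.1, fun hz =>
              hw''X ((hsplit u i hw''S).mpr ((mem_Yset_inr G T _ X u).mp hz))⟩
        obtain ⟨z, hz⟩ := hYprop
        have h4 := hG4' (Yset G T rep X) ⟨y, hy, trivial⟩
          (fun hsub => hz (hsub (Set.mem_univ z)))
        have hgood := cardSplit
          (fun e : G.edgeSet => (∀ x ∈ (e : Sym2 V), x ∈ (Set.univ : Set V)) ∧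
            ∃ a b, (e : Sym2 V) = s(a, b) ∧
              a ∈ Yset G T rep X ∩ Set.univ ∧ b ∈ Set.univ \ Yset G T rep X)
          (fun e : G.edgeSet =>
            (Sum.inr ⟨u0, i0⟩ : BlowVert G T) ∈ blowEnds G T att (Sum.inl e))
          4 2 h4 (hatt u0 i0)
        have hmap : ∀ e : G.edgeSet,
            (∃ a b, (e : Sym2 V) = s(a, b) ∧
              a ∈ Yset G T rep X ∩ Set.univ ∧ b ∈ Set.univ \ Yset G T rep X) →
            ¬ ((Sum.inr ⟨u0, i0⟩ : BlowVert G T) ∈ blowEnds G T att (Sum.inl e)) →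
            ((∀ x ∈ blowEnds G T att (Sum.inl e),
                x ∈ {x : BlowVert G T | x ≠ Sum.inr ⟨u0, i0⟩}) ∧
             ∃ a b, blowEnds G T att (Sum.inl e) = s(a, b) ∧
               a ∈ X ∩ {x : BlowVert G T | x ≠ Sum.inr ⟨u0, i0⟩} ∧
               b ∈ {x : BlowVert G T | x ≠ Sum.inr ⟨u0, i0⟩} \ X) := by
          rintro e ⟨a, b, hab, haY, hbY⟩ hnq
          have hends : blowEnds G T att (Sum.inl e) =
              s(bemb G T att e a, bemb G T att e b) := by
            rw [blowEnds_inl, hab, Sym2.map_pair_eq]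
          have hane : bemb G T att e a ≠ Sum.inr ⟨u0, i0⟩ := by
            intro h
            exact hnq (by rw [hends, ← h]; exact Sym2.mem_mk_left _ _)
          have hbne : bemb G T att e b ≠ Sum.inr ⟨u0, i0⟩ := by
            intro h
            exact hnq (by rw [hends, ← h]; exact Sym2.mem_mk_right _ _)
          have hga : ∀ h : a ∉ T,
              (Sum.inr ⟨⟨a, h⟩, att ⟨a, h⟩ e⟩ : BlowVert G T) ≠ Sum.inr ⟨u0, i0⟩ := by
            intro h hcontra
            apply hane
            rw [show bemb G T att e a = Sum.inr ⟨⟨a, h⟩, att ⟨a, h⟩ e⟩ from dif_neg h]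
            exact hcontra
          have hgb : ∀ h : b ∉ T,
              (Sum.inr ⟨⟨b, h⟩, att ⟨b, h⟩ e⟩ : BlowVert G T) ≠ Sum.inr ⟨u0, i0⟩ := by
            intro h hcontra
            apply hbne
            rw [show bemb G T att e b = Sum.inr ⟨⟨b, h⟩, att ⟨b, h⟩ e⟩ from dif_neg h]
            exact hcontra
          refine ⟨?_, bemb G T att e a, bemb G T att e b, hends,
            ⟨(hmem e a hga).mpr haY.1, hane⟩,
            hbne, fun hbX => hbY.2 ((hmem e b hgb).mp hbX)⟩
          rw [hends]
          intro x hx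
          rcases Sym2.mem_iff.mp hx with h | h <;> subst h
          · exact hane
          · exact hbne
        exact leCardOfInj 2 (fun e => ⟨Sum.inl e.1, hmap e.1 e.2.1.2 e.2.2⟩)
          (fun e1 e2 h => Subtype.ext (Sum.inl.inj (congrArg Subtype.val h))) hgood
      · -- some cycle split
        push_neg at hsplit
        obtain ⟨u, i, hiw, hui⟩ := hsplit
        by_cases huu0 : u = u0
        · subst huu0
          have hii0 : i ≠ i0 := fun h => hiw (by rw [h])
          rw [hrepu0] at hui
          have hcross : ∃ i' : Fin (cycSize G u.1), i' ≠ i0 ∧ i' + 1 ≠ i0 ∧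
              ¬ ((Sum.inr ⟨u, i'⟩ : BlowVert G T) ∈ X ↔
                (Sum.inr ⟨u, i' + 1⟩ : BlowVert G T) ∈ X) := by
            rcases hui with ⟨h1, h2⟩ | ⟨h1, h2⟩
            · exact finPathCross (fun i' => (Sum.inr ⟨u, i'⟩ : BlowVert G T) ∈ X) i0
                h1 h2 hii0 h10
            · exact finPathCross (fun i' => (Sum.inr ⟨u, i'⟩ : BlowVert G T) ∈ X) i0
                h2 h1 h10 hii0
          obtain ⟨i', hi'0, hi'1, hx'⟩ := hcross
          exact cycleCutTwo G T att X {x : BlowVert G T | x ≠ Sum.inr ⟨u, i0⟩} u i'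
            (blow_inr_ne hi'0) (blow_inr_ne hi'1) hx'
        · have hcross : ∃ i' : Fin (cycSize G u.1),
              ¬ ((Sum.inr ⟨u, i'⟩ : BlowVert G T) ∈ X ↔
                (Sum.inr ⟨u, i' + 1⟩ : BlowVert G T) ∈ X) := by
            rcases hui with ⟨h1, h2⟩ | ⟨h1, h2⟩
            · exact finOneCross (fun i' => (Sum.inr ⟨u, i'⟩ : BlowVert G T) ∈ X) h1 h2
            · exact finOneCross (fun i' => (Sum.inr ⟨u, i'⟩ : BlowVert G T) ∈ X) h2 h1
          obtain ⟨i', hi'⟩ := hcross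
          have hneu : ∀ k : Fin (cycSize G u.1),
              (Sum.inr ⟨u, k⟩ : BlowVert G T) ≠ Sum.inr ⟨u0, i0⟩ :=
            fun k h => huu0 (blow_inr_inj h).1
          exact cycleCutTwo G T att X {x : BlowVert G T | x ≠ Sum.inr ⟨u0, i0⟩} u i'
            (hneu i') (hneu (i' + 1)) hi'
end

section
/- Let D be a digraph and v a vertex of D whose in-degree and out-degree are both at least 1, such that some in-arborescence and some out-arborescence structure exist as follows: there are two directed paths from v to a fixed vertex set Q intersecting only in v, two directed paths from Q to v intersecting only in v, and D is 2-vertex-connected in Q. Then D is 2-vertex-connected in Q ∪ {v}, and consequently, if every vertex of V(D) \ Q admits such path pairs, and these can be added one vertex at a time maintaining the hypothesis, then D is 2-vertex-connected. -/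
open Relation

/-- `l` is (the vertex sequence of) a directed path from `u` to `v` in `D`. -/
def IsDipath {V : Type*} (D : V → V → Prop) (u v : V) (l : List V) : Prop :=
  l.Chain' D ∧ l.head? = some u ∧ l.getLast? = some v ∧ l.Nodup

/-- `D` is 2-vertex-connected in `X`: `|V| ≥ 3` and between any two distinct
vertices of `X` there are two internally disjoint directed paths. -/
def TwoVCin {V : Type*} (D : V → V → Prop) (X : Set V) : Prop :=
  3 ≤ Nat.card V ∧ ∀ u ∈ X, ∀ w ∈ X, u ≠ w →
    ∃ l₁ l₂ : List V, IsDipath D u w l₁ ∧ IsDipath D u w l₂ ∧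
      ∀ x, x ∈ l₁ → x ∈ l₂ → x = u ∨ x = w

/-- There are two `(v,X)`-paths meeting only in `v` and two `(X,v)`-paths
meeting only in `v`. -/
def PathPairs {V : Type*} (D : V → V → Prop) (X : Set V) (v : V) : Prop :=
  (∃ l₁ l₂ : List V, (∃ x₁ ∈ X, IsDipath D v x₁ l₁) ∧ (∃ x₂ ∈ X, IsDipath D v x₂ l₂) ∧
      ∀ x, x ∈ l₁ → x ∈ l₂ → x = v) ∧
  (∃ l₁ l₂ : List V, (∃ x₁ ∈ X, IsDipath D x₁ v l₁) ∧ (∃ x₂ ∈ X, IsDipath D x₂ v l₂) ∧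
      ∀ x, x ∈ l₁ → x ∈ l₂ → x = v)

open List

namespace M11

lemma zp_iff {α : Type*} {l : List α} {a b : α} :
    (a, b) ∈ l.zip l.tail ↔ ∃ i, ∃ h : i + 1 < l.length,
      l.get ⟨i, Nat.lt_of_succ_lt h⟩ = a ∧ l.get ⟨i+1, h⟩ = b := by
  induction l with
  | nil => simp
  | cons x t ih =>
    cases t with
    | nil => simp
    | cons y t' =>
      constructor
      · intro hmem
        rw [show (x :: y :: t').tail = y :: t' from rfl] at hmem
        rw [List.zip_cons_cons] at hmem
        rcases List.mem_cons.1 hmem with h | h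
        · exact ⟨0, by simp, by simp [Prod.ext_iff] at h; simp [h.1, h.2]⟩
        · rcases ih.1 h with ⟨i, hi, h1, h2⟩
          exact ⟨i+1, by simpa using Nat.succ_lt_succ hi, by simpa using h1, by simpa using h2⟩
      · rintro ⟨i, hi, h1, h2⟩
        rw [show (x :: y :: t').tail = y :: t' from rfl, List.zip_cons_cons]
        cases i with
        | zero =>
          simp at h1 h2
          exact List.mem_cons.2 (Or.inl (by simp [h1, h2]))
        | succ j =>
          refine List.mem_cons.2 (Or.inr (ih.2 ⟨j, by simpa using hi, ?_, ?_⟩))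
          · simpa using h1
          · simpa using h2

variable {α : Type*} {l : List α} {a b c : α}

lemma nd_inj (hnd : l.Nodup) {i j : Fin l.length} (h : l.get i = l.get j) : (i:ℕ) = j := by
  have := (List.nodup_iff_injective_get.1 hnd) h
  exact congrArg Fin.val this

lemma zp_mem_left (h : (a, b) ∈ l.zip l.tail) : a ∈ l := by
  rcases zp_iff.1 h with ⟨i, hi, h1, _⟩
  exact h1 ▸ l.get_mem _

lemma zp_mem_right (h : (a, b) ∈ l.zip l.tail) : b ∈ l := by
  rcases zp_iff.1 h with ⟨i, hi, _, h2⟩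
  exact h2 ▸ l.get_mem _

lemma zp_rel {r : α → α → Prop} (hc : l.Chain' r) (h : (a, b) ∈ l.zip l.tail) : r a b := by
  rcases zp_iff.1 h with ⟨i, hi, h1, h2⟩
  have := List.isChain_iff_getElem.1 hc i (by omega)
  simp only [List.get_eq_getElem] at h1 h2
  rwa [h1, h2] at this

lemma zp_succ_unique (hnd : l.Nodup) (h1 : (a, b) ∈ l.zip l.tail)
    (h2 : (a, c) ∈ l.zip l.tail) : b = c := by
  rcases zp_iff.1 h1 with ⟨i, hi, hi1, hi2⟩
  rcases zp_iff.1 h2 with ⟨j, hj, hj1, hj2⟩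
  have : (i:ℕ) = j := nd_inj hnd (hi1.trans hj1.symm)
  subst hi2; subst hj2
  congr 1
  exact Fin.ext (by simp [this])

lemma zp_pred_unique (hnd : l.Nodup) (h1 : (a, c) ∈ l.zip l.tail)
    (h2 : (b, c) ∈ l.zip l.tail) : a = b := by
  rcases zp_iff.1 h1 with ⟨i, hi, hi1, hi2⟩
  rcases zp_iff.1 h2 with ⟨j, hj, hj1, hj2⟩
  have : (i+1:ℕ) = j+1 := nd_inj hnd (hi2.trans hj2.symm)
  subst hi1; subst hj1
  congr 1
  exact Fin.ext (by simp; omega)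

lemma zp_not_head (hnd : l.Nodup) (hh : l.head? = some b) (h : (a, b) ∈ l.zip l.tail) :
    False := by
  rcases zp_iff.1 h with ⟨i, hi, _, h2⟩
  have h0 : 0 < l.length := by omega
  have hb : l.get ⟨0, h0⟩ = b := by
    cases l with
    | nil => simp at hh
    | cons x t => simp at hh; simpa using hh
  have : (i+1:ℕ) = 0 := nd_inj hnd (h2.trans hb.symm)
  omega

lemma zp_not_last (hnd : l.Nodup) (hh : l.getLast? = some a) (h : (a, b) ∈ l.zip l.tail) :
    False := by
  rcases zp_iff.1 h with ⟨i, hi, h1, _⟩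
  have hne : l ≠ [] := by rintro rfl; simp at hh
  have hlast : l.getLast hne = a := by
    rw [List.getLast?_eq_getLast hne] at hh
    exact Option.some_injective _ hh
  rw [List.getLast_eq_getElem] at hlast
  change l.get ⟨l.length - 1, by omega⟩ = _ at hlast
  have : (i:ℕ) = l.length - 1 := nd_inj hnd (h1.trans hlast.symm)
  omega

lemma zp_self (hnd : l.Nodup) (h : (a, a) ∈ l.zip l.tail) : False := by
  rcases zp_iff.1 h with ⟨i, hi, h1, h2⟩
  have : (i:ℕ) = i + 1 := nd_inj hnd (h1.trans h2.symm)
  omega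

lemma zp_swap (hnd : l.Nodup) (h1 : (a, b) ∈ l.zip l.tail) (h2 : (b, a) ∈ l.zip l.tail) :
    False := by
  rcases zp_iff.1 h1 with ⟨i, hi, hi1, hi2⟩
  rcases zp_iff.1 h2 with ⟨j, hj, hj1, hj2⟩
  have e1 : (i+1:ℕ) = j := nd_inj hnd (hi2.trans hj1.symm)
  have e2 : (j+1:ℕ) = i := nd_inj hnd (hj2.trans hi1.symm)
  omega

lemma zp_exists_pred (h : b ∈ l.tail) : ∃ a, (a, b) ∈ l.zip l.tail := by
  rcases List.mem_iff_get.1 h with ⟨⟨i, hi⟩, hget⟩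
  have hlen : i + 1 < l.length := by
    have := l.length_tail
    omega
  refine ⟨l.get ⟨i, Nat.lt_of_succ_lt hlen⟩, zp_iff.2 ⟨i, hlen, rfl, ?_⟩⟩
  rw [← hget]
  cases l with
  | nil => simp at hi
  | cons x t => simp

lemma zp_exists_succ (hmem : a ∈ l) (hl : l.getLast? = some c) (hne : a ≠ c) :
    ∃ b, (a, b) ∈ l.zip l.tail := by
  rcases List.mem_iff_get.1 hmem with ⟨⟨i, hi⟩, hget⟩
  have hlne : l ≠ [] := by rintro rfl; simp at hl
  have hlast : l.getLast hlne = c := by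
    rw [List.getLast?_eq_getLast hlne] at hl
    exact Option.some_injective _ hl
  have hilt : i + 1 < l.length := by
    rcases Nat.lt_or_ge (i+1) l.length with h | h
    · exact h
    · exfalso
      have : i = l.length - 1 := by omega
      rw [List.getLast_eq_getElem] at hlast
      change l.get ⟨l.length - 1, by omega⟩ = _ at hlast
      apply hne
      rw [← hget, ← hlast]
      congr 1
      exact Fin.ext (by simp; omega)
  exact ⟨l.get ⟨i+1, hilt⟩, zp_iff.2 ⟨i, hilt, hget, rfl⟩⟩

lemma zp_head_succ (hnd : l.Nodup) (hh : l.head? = some a) (h : (a, b) ∈ l.zip l.tail) :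
    l.tail.head? = some b := by
  rcases zp_iff.1 h with ⟨i, hi, h1, h2⟩
  have h0 : 0 < l.length := by omega
  have ha : l.get ⟨0, h0⟩ = a := by
    cases l with
    | nil => simp at hh
    | cons x t => simp at hh; simpa using hh
  have hz : (i:ℕ) = 0 := nd_inj hnd (h1.trans ha.symm)
  subst hz
  cases l with
  | nil => simp at hh
  | cons x t =>
    cases t with
    | nil => simp at hi
    | cons y t' => simp at h2 ⊢; exact h2


open Relation

variable {V : Type*} {r s : V → V → Prop} {u w z : V}

lemma dipath_mono (hrs : ∀ a b, r a b → s a b) {l : List V} (h : IsDipath r u w l) :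
    IsDipath s u w l :=
  ⟨List.IsChain.imp (fun a b hab => hrs a b hab) h.1, h.2.1, h.2.2.1, h.2.2.2⟩

lemma dipath_mem_head {l : List V} (h : IsDipath r u w l) : u ∈ l := by
  cases l with
  | nil => exact absurd h.2.1 (by simp)
  | cons x t =>
    have := h.2.1
    simp at this
    simp [this]

lemma dipath_mem_last {l : List V} (h : IsDipath r u w l) : w ∈ l := by
  have h2 := h.2.2.1
  have hne : l ≠ [] := by rintro rfl; simp at h2
  rw [List.getLast?_eq_getLast hne] at h2
  have : l.getLast hne = w := Option.some_injective _ h2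
  exact this ▸ List.getLast_mem hne

lemma dipath_mem_src {l : List V} (h : IsDipath r u w l) :
    ∀ x ∈ l, x = u ∨ ∃ a, r a x := by
  intro x hx
  cases l with
  | nil => simp at hx
  | cons y t =>
    have hy : y = u := by have := h.2.1; simpa using this
    rcases List.mem_cons.1 hx with rfl | hxt
    · exact Or.inl hy
    · right
      rcases zp_exists_pred (l := y :: t) (by simpa using hxt) with ⟨a, ha⟩
      exact ⟨a, zp_rel h.1 ha⟩

lemma dipath_rtg {l : List V} (h : IsDipath r u w l) : ReflTransGen r u w := by
  induction l generalizing u with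
  | nil => exact absurd h.2.1 (by simp)
  | cons x t ih =>
    have hx : x = u := by have := h.2.1; simpa using this
    subst hx
    cases t with
    | nil =>
      have : x = w := by have := h.2.2.1; simpa using this
      exact this ▸ ReflTransGen.refl
    | cons y t' =>
      have hchain := h.1
      have hxy : r x y := (List.isChain_cons_cons.1 hchain).1
      have htail : IsDipath r y w (y :: t') := by
        refine ⟨(List.isChain_cons_cons.1 hchain).2, by simp, ?_, h.2.2.2.of_cons⟩
        · have := h.2.2.1
          rwa [List.getLast?_cons_cons] at this
      exact ReflTransGen.head hxy (ih htail)

lemma rtg_chain_list (h : ReflTransGen r u w) :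
    ∃ l : List V, l.Chain' r ∧ l.head? = some u ∧ l.getLast? = some w := by
  induction h with
  | refl => exact ⟨[u], List.isChain_singleton u, by simp⟩
  | tail _ hbc ih =>
    rcases ih with ⟨l, hc, hh, hl⟩
    rename_i b c _
    refine ⟨l ++ [c], ?_, ?_, by simp⟩
    · simp only [List.Chain']
      rw [List.isChain_append]
      refine ⟨hc, by simp, ?_⟩
      intro x hx y hy
      rw [hl] at hx
      simp at hx hy
      subst hx; subst hy
      exact hbc
    · cases l with
      | nil => simp at hh
      | cons a t => simpa using hh

lemma not_nodup_decomp : ∀ {l : List V}, ¬ l.Nodup →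
    ∃ (x : V) (A B C : List V), l = A ++ x :: (B ++ x :: C) := by
  intro l
  induction l with
  | nil => intro h; exact absurd List.nodup_nil h
  | cons y t ih =>
    intro h
    by_cases hyt : y ∈ t
    · rcases List.append_of_mem hyt with ⟨B, C, rfl⟩
      exact ⟨y, [], B, C, by simp⟩
    · have : ¬ t.Nodup := fun hn => h (List.nodup_cons.2 ⟨hyt, hn⟩)
      rcases ih this with ⟨x, A, B, C, rfl⟩
      exact ⟨x, y :: A, B, C, by simp⟩

lemma getLast?_ne_nil_append (L : List V) (c : V) (t : List V) :
    (L ++ c :: t).getLast? = (c :: t).getLast? := by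
  rw [List.getLast?_append]
  rcases e : (c :: t).getLast? with _ | v
  · exact absurd e (by simp [List.getLast?_eq_getLast])
  · simp

lemma getLast?_splice {x : V} {A B C : List V} :
    (A ++ x :: (B ++ x :: C)).getLast? = (A ++ x :: C).getLast? := by
  cases C with
  | nil =>
    have e1 : A ++ x :: (B ++ [x]) = (A ++ x :: B) ++ [x] := by simp
    rw [e1, List.getLast?_concat]
    have e2 : A ++ [x] = A ++ [x] := rfl
    rw [show (A ++ x :: ([]:List V)) = A ++ [x] from rfl, List.getLast?_concat]
  | cons c t =>
    have e1 : A ++ x :: (B ++ x :: c :: t) = (A ++ x :: B ++ [x]) ++ (c :: t) := by simp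
    have e2 : A ++ x :: c :: t = (A ++ [x]) ++ (c :: t) := by simp
    rw [e1, e2, getLast?_ne_nil_append, getLast?_ne_nil_append]

lemma chain_splice {x : V} {A B C : List V}
    (h : (A ++ x :: (B ++ x :: C)).Chain' r) : (A ++ x :: C).Chain' r := by
  simp only [List.Chain'] at h ⊢
  rw [List.isChain_append] at h ⊢
  obtain ⟨hA, hrest, hlink⟩ := h
  refine ⟨hA, ?_, ?_⟩
  · have : ((x :: B) ++ x :: C).IsChain r := by simpa using hrest
    rw [List.isChain_append] at this
    exact this.2.1
  · intro a ha y hy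
    exact hlink a ha y (by simpa using hy)

lemma chain_dedup : ∀ n (l : List V), l.length ≤ n → l.Chain' r → l.head? = some u →
    l.getLast? = some w →
    ∃ l' : List V, l'.Chain' r ∧ l'.head? = some u ∧ l'.getLast? = some w ∧ l'.Nodup := by
  intro n
  induction n with
  | zero =>
    intro l hl _ hh _
    cases l with
    | nil => simp at hh
    | cons a t => simp at hl
  | succ n ih =>
    intro l hl hc hh hlast
    by_cases hnd : l.Nodup
    · exact ⟨l, hc, hh, hlast, hnd⟩
    · rcases not_nodup_decomp hnd with ⟨x, A, B, C, rfl⟩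
      refine ih (A ++ x :: C) ?_ (chain_splice hc) ?_ ?_
      · simp [List.length_append] at hl ⊢
        omega
      · cases A with
        | nil => simpa using hh
        | cons a t => simpa using hh
      · rw [← getLast?_splice (x := x) (A := A) (B := B) (C := C)]
        exact hlast

lemma exists_dipath (h : ReflTransGen r u w) : ∃ l, IsDipath r u w l := by
  rcases rtg_chain_list h with ⟨l, hc, hh, hl⟩
  rcases chain_dedup l.length l le_rfl hc hh hl with ⟨l', h1, h2, h3, h4⟩
  exact ⟨l', h1, h2, h3, h4⟩


open Classical in
lemma crossing_lemma {α : Type*} {p : α → Prop} {l : List α}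
    (hc : ∀ a b, (a, b) ∈ l.zip l.tail → p b → p a)
    {h0 e0 : α} (hhead : l.head? = some h0) (hp0 : p h0)
    (hlast : l.getLast? = some e0) (hpe : ¬ p e0) :
    ∃ x y, (x, y) ∈ l.zip l.tail ∧ p x ∧ ¬ p y ∧
      ∀ x' y', (x', y') ∈ l.zip l.tail → p x' → ¬ p y' → x' = x ∧ y' = y := by
  have hne : l ≠ [] := by rintro rfl; simp at hhead
  have hlen : 0 < l.length := List.length_pos_iff.2 hne
  have hget0 : l.get ⟨0, hlen⟩ = h0 := by
    cases l with
    | nil => simp at hhead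
    | cons a t => simpa using hhead
  have hgetlast : l.get ⟨l.length - 1, by omega⟩ = e0 := by
    rw [List.getLast?_eq_getLast hne] at hlast
    rw [List.get_eq_getElem, ← List.getLast_eq_getElem hne]
    exact Option.some_injective _ hlast
  have hex : ∃ i, ∃ h : i < l.length, ¬ p (l.get ⟨i, h⟩) :=
    ⟨l.length - 1, by omega, hgetlast ▸ hpe⟩
  let i0 := Nat.find hex
  obtain ⟨hi0lt, hi0⟩ : ∃ h : i0 < l.length, ¬ p (l.get ⟨i0, h⟩) := Nat.find_spec hex
  have hmin : ∀ j (h : j < l.length), j < i0 → p (l.get ⟨j, h⟩) := by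
    intro j h hj
    by_contra hnp
    exact Nat.find_min hex hj ⟨h, hnp⟩
  have hi0pos : 0 < i0 := by
    rcases Nat.eq_zero_or_pos i0 with h | h
    · exfalso; apply hi0; rw [show (⟨i0, hi0lt⟩ : Fin l.length) = ⟨0, hlen⟩ from Fin.ext h]
      rw [hget0]; exact hp0
    · exact h
  -- forward propagation of ¬p
  have hprop : ∀ k (h : k < l.length), i0 ≤ k → ¬ p (l.get ⟨k, h⟩) := by
    intro k
    induction k with
    | zero => intro h hk; rw [show (⟨0, h⟩ : Fin l.length) = ⟨i0, hi0lt⟩ from Fin.ext (by simp; omega)]; exact hi0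
    | succ m ih =>
      intro h hk
      rcases Nat.lt_or_ge m i0 with hm | hm
      · have : i0 = m + 1 := by omega
        rw [show (⟨m+1, h⟩ : Fin l.length) = ⟨i0, hi0lt⟩ from Fin.ext (by simp; omega)]
        exact hi0
      · intro hp
        have hmlt : m < l.length := by omega
        apply ih hmlt hm
        apply hc _ _ (zp_iff.2 ⟨m, h, rfl, rfl⟩) hp
  refine ⟨l.get ⟨i0 - 1, by omega⟩, l.get ⟨i0, hi0lt⟩,
    zp_iff.2 ⟨i0 - 1, by omega, rfl, by congr 1; exact Fin.ext (by simp; omega)⟩,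
    hmin _ _ (by omega), hi0, ?_⟩
  intro x' y' hmem hpx hpy
  rcases zp_iff.1 hmem with ⟨j, hj, hj1, hj2⟩
  have hjlt : j < i0 := by
    by_contra hge
    apply hprop j (by omega) (by omega)
    rw [hj1]; exact hpx
  have hj1ge : i0 ≤ j + 1 := by
    by_contra hlt
    apply hpy
    rw [← hj2]
    exact hmin _ _ (by omega)
  have hji : j = i0 - 1 := by omega
  constructor
  · rw [← hj1]; congr 1; exact Fin.ext (by simp [hji])
  · rw [← hj2]; congr 1; exact Fin.ext (by simp; omega)

def Pa (P : List V) : V → V → Prop := fun a b => (a, b) ∈ P.zip P.tail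

def Rr (D : V → V → Prop) (u w : V) (P : List V) : V × Bool → V × Bool → Prop :=
  fun s t =>
    (s.2 = true ∧ t.2 = false ∧ D s.1 t.1 ∧ ¬ Pa P s.1 t.1 ∧ s.1 ≠ t.1) ∨
    (s.2 = false ∧ t.2 = true ∧ Pa P t.1 s.1) ∨
    (s.2 = false ∧ t.2 = true ∧ s.1 = t.1 ∧ s.1 ∉ P) ∨
    (s.2 = true ∧ t.2 = false ∧ s.1 = t.1 ∧ s.1 ∈ P ∧ s.1 ≠ u ∧ s.1 ≠ w)



section Menger
variable {V : Type*} {D : V → V → Prop} {u w : V} {P : List V}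

lemma main_qind
    (hres : ¬ ReflTransGen (Rr D u w P) (u, true) (w, false))
    (hwout : ¬ ReflTransGen (Rr D u w P) (u, true) (w, true))
    {z : V}
    (hcross : ∀ a b, (a, b) ∈ P.zip P.tail →
      ReflTransGen (Rr D u w P) (u, true) (a, true) →
      ¬ ReflTransGen (Rr D u w P) (u, true) (b, false) → a = z ∨ b = z)
    (hvcross : ∀ b, b ∈ P → b ≠ u → b ≠ w →
      ReflTransGen (Rr D u w P) (u, true) (b, false) →
      ¬ ReflTransGen (Rr D u w P) (u, true) (b, true) → b = z)
    (hpath : ∃ l, IsDipath D u w l ∧ z ∉ l) : False := by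
  classical
  obtain ⟨l, ⟨hc, hh, hl, hnd⟩, hz⟩ := hpath
  have main : ∀ (t : List V) (a : V), (a :: t).Chain' D → (a :: t).Nodup →
      (a :: t).getLast? = some w → (∀ q ∈ a :: t, q ≠ z) → u ∉ t →
      ReflTransGen (Rr D u w P) (u, true) (a, true) → False := by
    intro t
    induction t with
    | nil =>
      intro a _ _ hlast _ _ hX
      have : a = w := by simpa using hlast
      subst this
      exact hwout hX
    | cons b t' ih =>
      intro a hchain hnd2 hlast hne2 hu2 hXa
      have harc : D a b := (List.isChain_cons_cons.1 hchain).1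
      have hab : a ≠ b := by
        intro h; subst h; simp at hnd2
      have hbz : b ≠ z := hne2 b (by simp)
      have haz : a ≠ z := hne2 a (by simp)
      have hbu : b ≠ u := by intro h; subst h; exact hu2 (by simp)
      have hbin : ReflTransGen (Rr D u w P) (u, true) (b, false) := by
        by_cases hPab : (a, b) ∈ P.zip P.tail
        · by_contra hnb
          rcases hcross a b hPab hXa hnb with h | h
          · exact haz h
          · exact hbz h
        · exact ReflTransGen.tail hXa (Or.inl ⟨rfl, rfl, harc, hPab, hab⟩)
      by_cases hbw : b = w
      · subst hbw; exact hres hbin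
      · have hbout : ReflTransGen (Rr D u w P) (u, true) (b, true) := by
          by_cases hbP : b ∈ P
          · by_contra hnb
            exact hbz (hvcross b hbP hbu hbw hbin hnb)
          · exact ReflTransGen.tail hbin (Or.inr (Or.inr (Or.inl ⟨rfl, rfl, rfl, hbP⟩)))
        exact ih b (List.isChain_cons_cons.1 hchain).2 hnd2.of_cons
          (by rwa [List.getLast?_cons_cons] at hlast)
          (fun q hq => hne2 q (List.mem_cons_of_mem a hq))
          (fun hu' => hu2 (List.mem_cons_of_mem b hu'))
          hbout
  cases l with
  | nil => simp at hh
  | cons a t =>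
    have hau : a = u := by simpa using hh
    subst hau
    exact main t a hc hnd hl (fun q hq h => hz (h ▸ hq))
      (fun hu' => (List.nodup_cons.1 hnd).1 hu') ReflTransGen.refl

lemma no_residual_false (hP : IsDipath D u w P) (hne : u ≠ w) (hDuw : ¬ D u w)
    (H : ∀ z, z ≠ u → z ≠ w → ∃ l, IsDipath D u w l ∧ z ∉ l)
    (hres : ¬ ReflTransGen (Rr D u w P) (u, true) (w, false)) : False := by
  obtain ⟨hPc, hPh, hPl, hPnd⟩ := hP
  have hcl : ∀ {s t}, ReflTransGen (Rr D u w P) (u, true) s → Rr D u w P s t →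
      ReflTransGen (Rr D u w P) (u, true) t := fun hs hst => ReflTransGen.tail hs hst
  have hXu : ReflTransGen (Rr D u w P) (u, true) (u, true) := ReflTransGen.refl
  have hwP : w ∈ P := dipath_mem_last ⟨hPc, hPh, hPl, hPnd⟩
  set g : V → Prop := fun x => x = u ∨ ReflTransGen (Rr D u w P) (u, true) (x, false) with hg
  have adj_g : ∀ a b, (a, b) ∈ P.zip P.tail → g b → g a := by
    intro a b hab hgb
    have hbu : b ≠ u := by
      rintro rfl
      exact zp_not_head hPnd hPh hab
    have hbin := hgb.resolve_left hbu
    have harcR : Rr D u w P (b, false) (a, true) := Or.inr (Or.inl ⟨rfl, rfl, hab⟩)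
    have haout := hcl hbin harcR
    by_cases hau : a = u
    · exact Or.inl hau
    · right
      have haw : a ≠ w := by
        rintro rfl
        exact zp_not_last hPnd hPl hab
      exact hcl haout (Or.inr (Or.inr (Or.inr ⟨rfl, rfl, rfl, zp_mem_left hab, hau, haw⟩)))
  have hgu : g u := Or.inl rfl
  have hgw : ¬ g w := by
    rintro (h | h)
    · exact hne h.symm
    · exact hres h
  obtain ⟨x, y, hxy, hgx, hgy, huniq⟩ := crossing_lemma adj_g hPh hgu hPl hgw
  have hwout : ¬ ReflTransGen (Rr D u w P) (u, true) (w, true) := by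
    intro hh
    rcases (ReflTransGen.cases_tail hh) with h | ⟨mid, _, hmid⟩
    · exact hne (by injection h with h1 _; exact h1.symm)
    · rcases hmid with ⟨h1, h2, _⟩ | ⟨h1, h2, h3⟩ | ⟨h1, h2, h3, h4⟩ | ⟨h1, h2, _⟩
      · simp at h2
      · exact zp_not_last hPnd hPl h3
      · exact h4 (h3 ▸ hwP)
      · simp at h2
  have hcross_gen : ∀ a b, (a, b) ∈ P.zip P.tail →
      ReflTransGen (Rr D u w P) (u, true) (a, true) →
      ¬ ReflTransGen (Rr D u w P) (u, true) (b, false) → a = x ∧ b = y := by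
    intro a b hab ha hb
    apply huniq a b hab
    · by_cases hau : a = u
      · exact Or.inl hau
      · right
        have haw : a ≠ w := by rintro rfl; exact zp_not_last hPnd hPl hab
        exact hcl ha (Or.inr (Or.inr (Or.inr ⟨rfl, rfl, rfl, zp_mem_left hab, hau, haw⟩)))
    · rintro (rfl | hbX)
      · exact zp_not_head hPnd hPh hab
      · exact hb hbX
  have hvcross_gen : ∀ b, b ∈ P → b ≠ u → b ≠ w →
      ReflTransGen (Rr D u w P) (u, true) (b, false) →
      ¬ ReflTransGen (Rr D u w P) (u, true) (b, true) →
      b = x ∧ (∃ d, (b, d) ∈ P.zip P.tail ∧ d = y) := by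
    intro b hbP hbu hbw hbin hbout
    obtain ⟨d, hbd⟩ := zp_exists_succ hbP hPl hbw
    have := huniq b d hbd (Or.inr hbin)
      (by
        rintro (rfl | hdX)
        · exact zp_not_head hPnd hPh hbd
        · exact hbout (hcl hdX (Or.inr (Or.inl ⟨rfl, rfl, hbd⟩))))
    exact ⟨this.1, d, hbd, this.2⟩
  by_cases hpx : ReflTransGen (Rr D u w P) (u, true) (x, true)
  case pos =>
    by_cases hyw : y = w
    case pos =>
      have hxu : x ≠ u := by
        rintro rfl
        exact hDuw (zp_rel hPc (hyw ▸ hxy))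
      have hxw : x ≠ w := by
        rintro rfl
        exact zp_not_last hPnd hPl hxy
      exact main_qind hres hwout (z := x)
        (fun a b hab ha hb => Or.inl (hcross_gen a b hab ha hb).1)
        (fun b hbP hbu hbw hbin hbout =>
          absurd ((hvcross_gen b hbP hbu hbw hbin hbout).1 ▸ hpx) hbout)
        (H x hxu hxw)
    case neg =>
      have hyu : y ≠ u := by rintro rfl; exact zp_not_head hPnd hPh hxy
      exact main_qind hres hwout (z := y)
        (fun a b hab ha hb => Or.inr (hcross_gen a b hab ha hb).2)
        (fun b hbP hbu hbw hbin hbout =>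
          absurd ((hvcross_gen b hbP hbu hbw hbin hbout).1 ▸ hpx) hbout)
        (H y hyu hyw)
  case neg =>
    have hxu : x ≠ u := by
      rintro rfl
      exact hpx hXu
    have hxw : x ≠ w := by
      rintro rfl
      exact zp_not_last hPnd hPl hxy
    exact main_qind hres hwout (z := x)
      (fun a b hab ha hb => absurd ha ((hcross_gen a b hab ha hb).1 ▸ hpx))
      (fun b hbP hbu hbw hbin hbout => (hvcross_gen b hbP hbu hbw hbin hbout).1)
      (H x hxu hxw)

end Menger


section Flow
variable {V : Type*} {F : V → V → Prop} {u w : V}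

lemma flow_traj [Finite V] (hne : u ≠ w)
    (h3 : ∀ a, ¬ F a u)
    (h5 : ∀ x, x ≠ u → x ≠ w → ∀ a b, F a x → F b x → a = b)
    (h7 : ∀ x, x ≠ u → x ≠ w → (∃ a, F a x) → ∃ b, F x b)
    {y : V} (hy : F u y) :
    ∃ l : List V, IsDipath F u w l ∧ l.tail.head? = some y := by
  classical
  have hyu : y ≠ u := fun h => h3 u (h ▸ hy)
  -- the trajectory
  let g : ℕ → V := fun n => Nat.rec (motive := fun _ => V) y
    (fun _ prev => if h : prev ≠ w ∧ ∃ b, F prev b then h.2.choose else prev) n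
  have g0 : g 0 = y := rfl
  have gstep_def : ∀ n, g (n+1) = if h : g n ≠ w ∧ ∃ b, F (g n) b then h.2.choose else g n := by
    intro n; rfl
  have inv : ∀ n, g n = w ∨ (g n ≠ u ∧ ∃ c, F c (g n)) := by
    intro n
    induction n with
    | zero => exact Or.inr ⟨hyu, u, hy⟩
    | succ m ih =>
      rcases ih with h | ⟨h1, h2⟩
      · left
        rw [gstep_def]
        rw [dif_neg (by simp [h])]
        exact h
      · by_cases hw : g m = w
        · left; rw [gstep_def, dif_neg (by simp [hw])]; exact hw
        · obtain ⟨b, hb⟩ := h7 (g m) h1 hw h2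
          have hcond : g m ≠ w ∧ ∃ b, F (g m) b := ⟨hw, b, hb⟩
          have harc : F (g m) (g (m+1)) := by
            rw [gstep_def, dif_pos hcond]
            exact hcond.2.choose_spec
          right
          exact ⟨fun h => h3 _ (h ▸ harc), _, harc⟩
  have arcstep : ∀ n, g n ≠ w → F (g n) (g (n+1)) := by
    intro n hnw
    rcases inv n with h | ⟨h1, h2⟩
    · exact absurd h hnw
    · obtain ⟨b, hb⟩ := h7 (g n) h1 hnw h2
      have hcond : g n ≠ w ∧ ∃ b, F (g n) b := ⟨hnw, b, hb⟩
      rw [gstep_def, dif_pos hcond]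
      exact hcond.2.choose_spec
  have gne_u : ∀ n, g n ≠ w → g n ≠ u := fun n hnw => ((inv n).resolve_left hnw).1
  -- descent
  have descent : ∀ m k, m < k → g m = g k → (∀ j, j ≤ k → g j ≠ w) → False := by
    intro m
    induction m with
    | zero =>
      intro k hk heq hall
      have hk1 : F (g (k-1)) (g k) := by
        have := arcstep (k-1) (hall (k-1) (by omega))
        have e : k - 1 + 1 = k := by omega
        rwa [e] at this
      have h0 : F u (g 0) := g0 ▸ hy
      have : u = g (k-1) := by
        apply h5 (g k) (gne_u k (hall k le_rfl)) (hall k le_rfl)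
        · exact heq ▸ h0
        · exact hk1
      exact gne_u (k-1) (hall (k-1) (by omega)) this.symm
    | succ m ih =>
      intro k hk heq hall
      have hkpos : 0 < k := by omega
      have ha : F (g m) (g (m+1)) := arcstep m (hall m (by omega))
      have hb : F (g (k-1)) (g k) := by
        have := arcstep (k-1) (hall (k-1) (by omega))
        have e : k - 1 + 1 = k := by omega
        rwa [e] at this
      have hpred : g m = g (k-1) := by
        apply h5 (g (m+1)) (gne_u (m+1) (hall (m+1) (by omega))) (hall (m+1) (by omega))
        · exact ha
        · exact heq ▸ hb
      exact ih (k-1) (by omega) hpred (fun j hj => hall j (by omega))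
  -- termination
  have hterm : ∃ n, g n = w := by
    by_contra hno
    push_neg at hno
    obtain ⟨m, k, hmk, heq⟩ := Finite.exists_ne_map_eq_of_infinite g
    rcases Nat.lt_or_ge m k with h | h
    · exact descent m k h heq (fun j _ => hno j)
    · have : k < m := by omega
      exact descent k m this heq.symm (fun j _ => hno j)
  let N := Nat.find hterm
  have hN : g N = w := Nat.find_spec hterm
  have hNmin : ∀ j, j < N → g j ≠ w := fun j hj => Nat.find_min hterm hj
  -- injectivity up to N
  have hinj : ∀ m k, m ≤ N → k ≤ N → g m = g k → m = k := by
    have aux : ∀ m k, m < k → k ≤ N → g m = g k → False := by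
      intro m k hmk hkN heq
      rcases Nat.lt_or_ge k N with hlt | hge
      · exact descent m k hmk heq (fun j hj => hNmin j (by omega))
      · have hkN' : k = N := by omega
        subst hkN'
        exact hNmin m hmk (heq.trans hN)
    intro m k hm hk heq
    rcases Nat.lt_trichotomy m k with h | h | h
    · exact absurd heq (fun he => aux m k h hk he)
    · exact h
    · exact absurd heq.symm (fun he => aux k m h hm he)
  -- the list
  let h : ℕ → V := fun i => Nat.casesOn i u g
  refine ⟨(List.range (N+2)).map h, ⟨?_, ?_, ?_, ?_⟩, ?_⟩
  · simp only [List.Chain']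
    rw [List.isChain_map, List.isChain_range_succ]
    intro m hm
    cases m with
    | zero =>
      show F u (g 0)
      rw [g0]; exact hy
    | succ j =>
      show F (g j) (g (j+1))
      exact arcstep j (hNmin j (by omega))
  · rw [List.range_succ_eq_map, List.map_cons]
    show some (h 0) = some u
    rfl
  · have e : (List.range (N+2)).map h = (List.range (N+1)).map h ++ [h (N+1)] := by
      rw [List.range_succ, List.map_append]
      rfl
    rw [e, List.getLast?_concat]
    show some (g N) = some w
    rw [hN]
  · refine List.Nodup.map_on ?_ List.nodup_range
    intro i hi j hj hij
    simp only [List.mem_range] at hi hj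
    cases i with
    | zero =>
      cases j with
      | zero => rfl
      | succ j' =>
        exfalso
        have : g j' ≠ u := by
          rcases Nat.lt_or_ge j' N with h' | h'
          · exact gne_u j' (hNmin j' h')
          · have : j' = N := by omega
            subst this
            rw [hN]; exact fun he => hne he.symm
        exact this hij.symm
    | succ i' =>
      cases j with
      | zero =>
        exfalso
        have : g i' ≠ u := by
          rcases Nat.lt_or_ge i' N with h' | h'
          · exact gne_u i' (hNmin i' h')
          · have : i' = N := by omega
            subst this
            rw [hN]; exact fun he => hne he.symm
        exact this hij
      | succ j' =>
        have := hinj i' j' (by omega) (by omega) hij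
        omega
  · rw [List.range_succ_eq_map, List.range_succ_eq_map, List.map_cons, List.map_cons,
      List.map_cons]
    show some (h 1) = some y
    rw [show h 1 = g 0 from rfl, g0]

end Flow


lemma disj_paths {V : Type*} {F : V → V → Prop} {u w y1 y2 : V} {L1 L2 : List V}
    (h4 : ∀ b, ¬ F w b)
    (h5 : ∀ x, x ≠ u → x ≠ w → ∀ a b, F a x → F b x → a = b)
    (hL1 : IsDipath F u w L1) (hL2 : IsDipath F u w L2)
    (hy1 : L1.tail.head? = some y1) (hy2 : L2.tail.head? = some y2) (hy : y1 ≠ y2) :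
    ∀ x ∈ L1, x ∈ L2 → x = u ∨ x = w := by
  obtain ⟨hc1, hh1, hl1, hn1⟩ := hL1
  obtain ⟨hc2, hh2, hl2, hn2⟩ := hL2
  have key : ∀ i (hi : i < L1.length), L1.get ⟨i, hi⟩ ∈ L2 →
      L1.get ⟨i, hi⟩ = u ∨ L1.get ⟨i, hi⟩ = w := by
    intro i
    induction i using Nat.strong_induction_on with
    | _ i ih =>
      intro hi hmem
      by_cases hxu : L1.get ⟨i, hi⟩ = u
      · exact Or.inl hxu
      by_cases hxw : L1.get ⟨i, hi⟩ = w
      · exact Or.inr hxw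
      exfalso
      set x := L1.get ⟨i, hi⟩ with hx
      have hipos : 0 < i := by
        rcases Nat.eq_zero_or_pos i with h | h
        · exfalso
          apply hxu
          rw [hx]
          cases L1 with
          | nil => simp at hh1
          | cons a t =>
            have : a = u := by simpa using hh1
            subst h
            simpa using this
        · exact h
      have hpair1 : (L1.get ⟨i-1, by omega⟩, x) ∈ L1.zip L1.tail :=
        zp_iff.2 ⟨i-1, by omega, rfl, by rw [hx]; congr 1; exact Fin.ext (by simp; omega)⟩
      have ha1 : F (L1.get ⟨i-1, by omega⟩) x := zp_rel hc1 hpair1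
      -- x in tail of L2
      have hxt2 : x ∈ L2.tail := by
        cases L2 with
        | nil => simp at hmem
        | cons a t =>
          have hau : a = u := by simpa using hh2
          rcases List.mem_cons.1 hmem with h | h
          · exact absurd (h.trans hau) hxu
          · simpa using h
      obtain ⟨a2, hpair2⟩ := zp_exists_pred hxt2
      have ha2 : F a2 x := zp_rel hc2 hpair2
      have heqp : L1.get ⟨i-1, by omega⟩ = a2 := h5 x hxu hxw _ _ ha1 ha2
      by_cases hpu : L1.get ⟨i-1, by omega⟩ = u
      · -- x is the second vertex of both paths
        have e1 : x = y1 := by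
          have := zp_head_succ hn1 hh1 (hpu ▸ hpair1)
          rw [hy1] at this
          exact (Option.some_injective _ this).symm
        have e2 : x = y2 := by
          have := zp_head_succ hn2 hh2 ((heqp ▸ hpu) ▸ hpair2)
          rw [hy2] at this
          exact (Option.some_injective _ this).symm
        exact hy (e1 ▸ e2 ▸ rfl)
      by_cases hpw : L1.get ⟨i-1, by omega⟩ = w
      · exact h4 x (hpw ▸ ha1)
      · have hmem2 : L1.get ⟨i-1, by omega⟩ ∈ L2 := heqp ▸ zp_mem_left hpair2
        rcases ih (i-1) (by omega) (by omega) hmem2 with h | h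
        · exact hpu h
        · exact hpw h
  intro x hx1 hx2
  rcases List.mem_iff_get.1 hx1 with ⟨⟨i, hi⟩, hget⟩
  have := key i hi (hget ▸ hx2)
  rwa [hget] at this


section Aug
variable {V : Type*} {D : V → V → Prop} {u w : V} {P : List V}

lemma augment [Finite V] {WL : List (V × Bool)}
    (hP : IsDipath D u w P) (hne : u ≠ w) (hDuw : ¬ D u w)
    (hW : IsDipath (Rr D u w P) (u, true) (w, false) WL) :
    ∃ l₁ l₂ : List V, IsDipath D u w l₁ ∧ IsDipath D u w l₂ ∧
      ∀ x ∈ l₁, x ∈ l₂ → x = u ∨ x = w := by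
  classical
  obtain ⟨hPc, hPh, hPl, hPnd⟩ := hP
  obtain ⟨hWc, hWh, hWl, hWnd⟩ := hW
  have huP : u ∈ P := dipath_mem_head ⟨hPc, hPh, hPl, hPnd⟩
  have hwP : w ∈ P := dipath_mem_last ⟨hPc, hPh, hPl, hPnd⟩
  -- classification of WL arcs
  have hxin_revP : ∀ (x : V), x ∈ P → ∀ t, ((x, false), t) ∈ WL.zip WL.tail →
      Pa P t.1 x ∧ t.2 = true := by
    intro x hxP t ht
    rcases zp_rel hWc ht with ⟨h1, _⟩ | ⟨_, h2, h3⟩ | ⟨_, _, _, h4⟩ | ⟨h1, _⟩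
    · simp at h1
    · exact ⟨h3, h2⟩
    · exact absurd hxP h4
    · simp at h1
  have hxin_fwdVert : ∀ (x : V), x ∉ P → ∀ t, ((x, false), t) ∈ WL.zip WL.tail →
      t = (x, true) := by
    intro x hxP t ht
    rcases zp_rel hWc ht with ⟨h1, _⟩ | ⟨_, h2, h3⟩ | ⟨_, h2, h3, _⟩ | ⟨h1, _⟩
    · simp at h1
    · exact absurd (zp_mem_right h3) hxP
    · exact Prod.ext h3.symm h2
    · simp at h1
  have hxout_out : ∀ (x : V) t, ((x, true), t) ∈ WL.zip WL.tail →
      (∃ b, t = (b, false) ∧ D x b ∧ ¬ Pa P x b ∧ x ≠ b) ∨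
        (t = (x, false) ∧ x ∈ P ∧ x ≠ u) := by
    intro x t ht
    rcases zp_rel hWc ht with ⟨_, h2, h3, h4, h5⟩ | ⟨h1, _⟩ | ⟨h1, _⟩ | ⟨_, h2, h3, h4, h5, _⟩
    · exact Or.inl ⟨t.1, Prod.ext rfl h2, h3, h4, h5⟩
    · simp at h1
    · simp at h1
    · exact Or.inr ⟨Prod.ext h3.symm h2, h4, h5⟩
  -- u_in and w_out are not on WL
  have pre1 : (u, false) ∉ WL := by
    intro hmem
    obtain ⟨t, ht⟩ := zp_exists_succ hmem hWl (by simp [hne])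
    rcases hxin_revP u huP t ht with ⟨h3, _⟩
    exact zp_not_head hPnd hPh h3
  have pre2 : (w, true) ∉ WL := by
    intro hmem
    have hmt : (w, true) ∈ WL.tail := by
      cases WL with
      | nil => simp at hWh
      | cons c tW =>
        have hc : c = (u, true) := by simpa using hWh
        rcases List.mem_cons.1 hmem with h | h
        · exfalso
          rw [hc] at h
          injection h with h1 _
          exact hne h1.symm
        · simpa using h
    obtain ⟨s, hs⟩ := zp_exists_pred hmt
    rcases zp_rel hWc hs with ⟨_, h2, _⟩ | ⟨_, _, h3⟩ | ⟨_, _, h3, h4⟩ | ⟨_, h2, _⟩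
    · simp at h2
    · exact zp_not_last hPnd hPl h3
    · exact h4 (h3 ▸ hwP)
    · simp at h2
  have pre4 : ∀ s, (s, ((u : V), true)) ∉ WL.zip WL.tail := fun s h =>
    zp_not_head hWnd hWh h
  -- the flow relation
  set Wf : V → V → Prop := fun a b => ((a, true), (b, false)) ∈ WL.zip WL.tail ∧ a ≠ b
    with hWfdef
  set Wr : V → V → Prop := fun a b => ((b, false), (a, true)) ∈ WL.zip WL.tail with hWrdef
  set F : V → V → Prop := fun a b => (Pa P a b ∨ Wf a b) ∧ ¬ Wr a b with hFdef
  have hWfD : ∀ a b, Wf a b → D a b ∧ ¬ Pa P a b := by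
    intro a b hab
    rcases hxout_out a _ hab.1 with ⟨b', hb', h3, h4, _⟩ | ⟨hb', _⟩
    · have hbb : b = b' := by injection hb' with h1 _
      subst hbb
      exact ⟨h3, h4⟩
    · exfalso
      injection hb' with h1 _
      exact hab.2 h1.symm
  have h1F : ∀ a b, F a b → D a b := by
    rintro a b ⟨hor, _⟩
    rcases hor with h | h
    · exact zp_rel hPc h
    · exact (hWfD a b h).1
  have c_cancel : ∀ x, x ∈ P → x ≠ w → (x, false) ∈ WL → ∀ a, Pa P a x → Wr a x := by
    intro x hxP hxw hmem a hPa
    obtain ⟨t, ht⟩ := zp_exists_succ hmem hWl (by simp [hxw])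
    obtain ⟨hPa', ht2⟩ := hxin_revP x hxP t ht
    have h1 : t.1 = a := zp_pred_unique hPnd hPa' hPa
    have : t = (a, true) := Prod.ext h1 ht2
    rw [this] at ht
    exact ht
  have h3F : ∀ a, ¬ F a u := by
    rintro a ⟨hor, _⟩
    rcases hor with h | h
    · exact zp_not_head hPnd hPh h
    · exact pre1 (zp_mem_right h.1)
  have h4F : ∀ b, ¬ F w b := by
    rintro b ⟨hor, _⟩
    rcases hor with h | h
    · exact zp_not_last hPnd hPl h
    · exact pre2 (zp_mem_left h.1)
  have h5F : ∀ x, x ≠ u → x ≠ w → ∀ a b, F a x → F b x → a = b := by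
    rintro x hxu hxw a b ⟨ha, hna⟩ ⟨hb, hnb⟩
    rcases ha with ha | ha <;> rcases hb with hb | hb
    · exact zp_pred_unique hPnd ha hb
    · exact absurd (c_cancel x (zp_mem_right ha) hxw (zp_mem_right hb.1) a ha) hna
    · exact absurd (c_cancel x (zp_mem_right hb) hxw (zp_mem_right ha.1) b hb) hnb
    · have := zp_pred_unique hWnd ha.1 hb.1
      exact congrArg Prod.fst this
  have h7F : ∀ x, x ≠ u → x ≠ w → (∃ a, F a x) → ∃ b, F x b := by
    rintro x hxu hxw ⟨a, ⟨hor, hnc⟩⟩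
    have psucc_ok : (x, true) ∉ WL → x ∈ P → ∃ b, F x b := by
      intro houtN hxP
      obtain ⟨b, hb⟩ := zp_exists_succ hxP hPl hxw
      exact ⟨b, Or.inl hb, fun hw => houtN (zp_mem_right hw)⟩
    have xout_step : (x, true) ∈ WL →
        (∃ b, F x b) ∨ (((x, true), (x, false)) ∈ WL.zip WL.tail ∧ x ∈ P) := by
      intro hm
      obtain ⟨t, ht⟩ := zp_exists_succ hm hWl (by simp)
      rcases hxout_out x t ht with ⟨b, rfl, hD, hnP, hxb⟩ | ⟨rfl, hxP, _⟩
      · exact Or.inl ⟨b, ⟨Or.inr ⟨ht, hxb⟩, fun hw => zp_swap hWnd ht hw⟩⟩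
      · exact Or.inr ⟨ht, hxP⟩
    rcases hor with hPa | hWf'
    · have hxP : x ∈ P := zp_mem_right hPa
      have hxinN : (x, false) ∉ WL := fun hm => hnc (c_cancel x hxP hxw hm a hPa)
      by_cases hout : (x, true) ∈ WL
      · rcases xout_step hout with h | ⟨harc, _⟩
        · exact h
        · exact absurd (zp_mem_right harc) hxinN
      · exact psucc_ok hout hxP
    · have hxin : (x, false) ∈ WL := zp_mem_right hWf'.1
      by_cases hxP : x ∈ P
      · by_cases hout : (x, true) ∈ WL
        · rcases xout_step hout with h | ⟨harc, _⟩
          · exact h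
          · have heq := zp_pred_unique hWnd harc hWf'.1
            exact absurd (congrArg Prod.fst heq).symm hWf'.2
        · exact psucc_ok hout hxP
      · obtain ⟨t, ht⟩ := zp_exists_succ hxin hWl (by simp [hxw])
        have htx := hxin_fwdVert x hxP t ht
        rw [htx] at ht
        have hout : (x, true) ∈ WL := zp_mem_right ht
        rcases xout_step hout with h | ⟨_, hxP'⟩
        · exact h
        · exact absurd hxP' hxP
  -- starting arcs
  obtain ⟨p1, restP, hPform⟩ : ∃ p1 restP, P = u :: p1 :: restP := by
    cases P with
    | nil => simp at hPh
    | cons a tP =>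
      have ha : a = u := by simpa using hPh
      subst ha
      cases tP with
      | nil =>
        exfalso
        have : a = w := by simpa using hPl
        exact hne this
      | cons p1 restP => exact ⟨p1, restP, rfl⟩
  have hPa_up1 : Pa P u p1 := by
    rw [hPform]
    show (u, p1) ∈ (u :: p1 :: restP).zip (p1 :: restP)
    rw [List.zip_cons_cons]
    exact List.mem_cons.2 (Or.inl rfl)
  have hFup1 : F u p1 := ⟨Or.inl hPa_up1, fun hw => pre4 _ hw⟩
  obtain ⟨s0, restW, hWform⟩ : ∃ s0 restW, WL = (u, true) :: s0 :: restW := by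
    cases WL with
    | nil => simp at hWh
    | cons c tW =>
      have hc : c = (u, true) := by simpa using hWh
      subst hc
      cases tW with
      | nil =>
        exfalso
        simp at hWl
      | cons s0 restW => exact ⟨s0, restW, rfl⟩
  have hfst : (((u : V), true), s0) ∈ WL.zip WL.tail := by
    rw [hWform]
    show ((u, true), s0) ∈ ((u,true) :: s0 :: restW).zip (s0 :: restW)
    rw [List.zip_cons_cons]
    exact List.mem_cons.2 (Or.inl rfl)
  obtain ⟨y2, hs0, hDy2, hnPy2, huy2⟩ :
      ∃ y2, s0 = (y2, false) ∧ D u y2 ∧ ¬ Pa P u y2 ∧ u ≠ y2 := by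
    rcases hxout_out u s0 hfst with ⟨b, hb, h3, h4, h5⟩ | ⟨_, _, h⟩
    · exact ⟨b, hb, h3, h4, h5⟩
    · exact absurd rfl h
  have hFuy2 : F u y2 := by
    refine ⟨Or.inr ⟨hs0 ▸ hfst, huy2⟩, fun hw => pre4 _ hw⟩
  have hy12 : p1 ≠ y2 := fun h => hnPy2 (h ▸ hPa_up1)
  -- build the two paths
  obtain ⟨L1, hL1, ht1⟩ := flow_traj hne h3F h5F h7F hFup1
  obtain ⟨L2, hL2, ht2⟩ := flow_traj hne h3F h5F h7F hFuy2
  exact ⟨L1, L2, dipath_mono h1F hL1, dipath_mono h1F hL2,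
    disj_paths h4F h5F hL1 hL2 ht1 ht2 hy12⟩

end Aug

lemma menger2 {V : Type*} [Finite V] {D : V → V → Prop} {u w : V} (hne : u ≠ w)
    (hex : ∃ l, IsDipath D u w l)
    (H : ∀ z, z ≠ u → z ≠ w → ∃ l, IsDipath D u w l ∧ z ∉ l) :
    ∃ l₁ l₂, IsDipath D u w l₁ ∧ IsDipath D u w l₂ ∧
      ∀ x ∈ l₁, x ∈ l₂ → x = u ∨ x = w := by
  by_cases hDuw : D u w
  · have hdp : IsDipath D u w [u, w] := ⟨List.isChain_cons_cons.2 ⟨hDuw, List.isChain_singleton _⟩, by simp, by simp, by simp [hne]⟩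
    refine ⟨[u, w], [u, w], hdp, hdp, ?_⟩
    intro x hx _
    rcases List.mem_cons.1 hx with rfl | hx'
    · exact Or.inl rfl
    · simp at hx'
      exact Or.inr hx'
  · obtain ⟨P, hP⟩ := hex
    by_cases hres : ReflTransGen (Rr D u w P) (u, true) (w, false)
    · obtain ⟨WL, hWL⟩ := exists_dipath hres
      exact augment hP hne hDuw hWL
    · exact absurd (no_residual_false hP hne hDuw H hres) id


section Outer
variable {V : Type*} {D : V → V → Prop} {a b : V}

lemma three_exists [Finite V] (h3 : 3 ≤ Nat.card V) (a b : V) : ∃ c, c ≠ a ∧ c ≠ b := by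
  by_contra h
  push_neg at h
  have hsub : (Set.univ : Set V) ⊆ {a, b} := by
    intro x _
    by_cases hx : x = a
    · simp [hx]
    · simp [h x hx]
  have h1 : (Set.univ : Set V).ncard ≤ ({a, b} : Set V).ncard :=
    Set.ncard_le_ncard hsub (Set.toFinite _)
  have h2 : ({a, b} : Set V).ncard ≤ 2 := by
    refine le_trans (Set.ncard_insert_le _ _) ?_
    simp [Set.ncard_singleton]
  rw [Set.ncard_univ] at h1
  omega

lemma avoid_of_dipath {z : V} {l : List V} (h : IsDipath D a b l) (hz : z ∉ l) :
    ReflTransGen (fun x y => D x y ∧ x ≠ z ∧ y ≠ z) a b := by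
  induction l generalizing a with
  | nil => exact absurd h.2.1 (by simp)
  | cons x t ih =>
    have hx : x = a := by simpa using h.2.1
    subst hx
    cases t with
    | nil =>
      have : x = b := by simpa using h.2.2.1
      exact this ▸ ReflTransGen.refl
    | cons y t' =>
      have hchain := h.1
      have hxy : D x y := (List.isChain_cons_cons.1 hchain).1
      have htail : IsDipath D y b (y :: t') := by
        refine ⟨(List.isChain_cons_cons.1 hchain).2, by simp, ?_, h.2.2.2.of_cons⟩
        have := h.2.2.1
        rwa [List.getLast?_cons_cons] at this
      refine ReflTransGen.head ⟨hxy, ?_, ?_⟩ (ih htail (fun hzt => hz (List.mem_cons_of_mem _ hzt)))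
      · exact fun he => hz (he ▸ List.mem_cons_self)
      · exact fun he => hz (he ▸ List.mem_cons_of_mem _ (List.mem_cons_self))

lemma dipath_avoid_exists {z : V} (haz : a ≠ z)
    (h : ReflTransGen (fun x y => D x y ∧ x ≠ z ∧ y ≠ z) a b) :
    ∃ l, IsDipath D a b l ∧ z ∉ l := by
  obtain ⟨l, hl⟩ := exists_dipath h
  refine ⟨l, dipath_mono (fun x y hxy => hxy.1) hl, ?_⟩
  intro hzl
  rcases dipath_mem_src hl z hzl with h' | ⟨c, hc⟩
  · exact haz h'.symm
  · exact hc.2.2 rfl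

end Outer


section Ext
variable {V : Type*} {D : V → V → Prop}

lemma extension [Finite V] {X : Set V} {v : V}
    (hX : TwoVCin D X) (hv : v ∉ X) (hp : PathPairs D X v) : TwoVCin D (X ∪ {v}) := by
  obtain ⟨hcard, hpairs⟩ := hX
  have havoidX : ∀ a ∈ X, ∀ b ∈ X, a ≠ b → ∀ z, z ≠ a → z ≠ b →
      ∃ l, IsDipath D a b l ∧ z ∉ l := by
    intro a ha b hb hab z hza hzb
    obtain ⟨l1, l2, h1, h2, hdisj⟩ := hpairs a ha b hb hab
    by_cases hz1 : z ∈ l1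
    · refine ⟨l2, h2, fun hz2 => ?_⟩
      rcases hdisj z hz1 hz2 with h | h
      · exact hza h
      · exact hzb h
    · exact ⟨l1, h1, hz1⟩
  obtain ⟨hout, hin⟩ := hp
  have glue_out : ∀ (m : List V) (x : V), x ∈ X → IsDipath D v x m →
      ∀ b ∈ X, ∀ z, z ≠ v → z ≠ b → z ∉ m → ∃ l, IsDipath D v b l ∧ z ∉ l := by
    intro m x hxX hdm b hb z hzv hzb hzm
    by_cases hxb : x = b
    · subst hxb; exact ⟨m, hdm, hzm⟩
    · have hzx : z ≠ x := fun h => hzm (h ▸ dipath_mem_last hdm)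
      obtain ⟨l', hl', hzl'⟩ := havoidX x hxX b hb hxb z hzx hzb
      exact dipath_avoid_exists (fun h => hzv h.symm)
        ((avoid_of_dipath hdm hzm).trans (avoid_of_dipath hl' hzl'))
  have hVout : ∀ b ∈ X, ∀ z, z ≠ v → z ≠ b → ∃ l, IsDipath D v b l ∧ z ∉ l := by
    intro b hb z hzv hzb
    obtain ⟨m1, m2, ⟨x1, hx1, hd1⟩, ⟨x2, hx2, hd2⟩, hm⟩ := hout
    by_cases hz1 : z ∈ m1
    · have hz2 : z ∉ m2 := fun hz2 => hzv (hm z hz1 hz2)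
      exact glue_out m2 x2 hx2 hd2 b hb z hzv hzb hz2
    · exact glue_out m1 x1 hx1 hd1 b hb z hzv hzb hz1
  have glue_in : ∀ (m : List V) (x : V), x ∈ X → IsDipath D x v m →
      ∀ a ∈ X, ∀ z, z ≠ a → z ≠ v → z ∉ m → ∃ l, IsDipath D a v l ∧ z ∉ l := by
    intro m x hxX hdm a ha z hza hzv hzm
    by_cases hxa : x = a
    · subst hxa; exact ⟨m, hdm, hzm⟩
    · have hzx : z ≠ x := fun h => hzm (h ▸ dipath_mem_head hdm)
      obtain ⟨l', hl', hzl'⟩ := havoidX a ha x hxX (Ne.symm hxa) z hza hzx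
      exact dipath_avoid_exists (fun h => hza h.symm)
        ((avoid_of_dipath hl' hzl').trans (avoid_of_dipath hdm hzm))
  have hVin : ∀ a ∈ X, ∀ z, z ≠ a → z ≠ v → ∃ l, IsDipath D a v l ∧ z ∉ l := by
    intro a ha z hza hzv
    obtain ⟨m1, m2, ⟨x1, hx1, hd1⟩, ⟨x2, hx2, hd2⟩, hm⟩ := hin
    by_cases hz1 : z ∈ m1
    · have hz2 : z ∉ m2 := fun hz2 => hzv (hm z hz1 hz2)
      exact glue_in m2 x2 hx2 hd2 a ha z hza hzv hz2
    · exact glue_in m1 x1 hx1 hd1 a ha z hza hzv hz1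
  refine ⟨hcard, ?_⟩
  intro p hp' q hq' hpq
  rcases hp' with hpX | hpv <;> rcases hq' with hqX | hqv
  · exact hpairs p hpX q hqX hpq
  · have hqv' : q = v := hqv
    subst hqv'
    refine menger2 hpq ?_ (fun z hz1 hz2 => hVin p hpX z hz1 hz2)
    obtain ⟨c, hc1, hc2⟩ := three_exists hcard p q
    obtain ⟨l, hl, _⟩ := hVin p hpX c hc1 hc2
    exact ⟨l, hl⟩
  · have hpv' : p = v := hpv
    subst hpv'
    refine menger2 hpq ?_ (fun z hz1 hz2 => hVout q hqX z hz1 hz2)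
    obtain ⟨c, hc1, hc2⟩ := three_exists hcard p q
    obtain ⟨l, hl, _⟩ := hVout q hqX c hc1 hc2
    exact ⟨l, hl⟩
  · exact absurd ((Set.mem_singleton_iff.1 hpv).trans (Set.mem_singleton_iff.1 hqv).symm) hpq

lemma iterate_univ [Finite V] {Q : Set V}
    (hstep : ∀ X : Set V, Q ⊆ X → TwoVCin D X → X ≠ Set.univ →
      ∃ w ∉ X, PathPairs D X w) :
    ∀ n (X : Set V), Xᶜ.ncard ≤ n → Q ⊆ X → TwoVCin D X → TwoVCin D Set.univ := by
  intro n
  induction n with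
  | zero =>
    intro X hle hQX hX
    have hX0 : Xᶜ.ncard = 0 := le_antisymm hle (Nat.zero_le _)
    have hXe : Xᶜ = ∅ := (Set.ncard_eq_zero (Set.toFinite _)).1 hX0
    have : X = Set.univ := by rwa [Set.compl_empty_iff] at hXe
    exact this ▸ hX
  | succ n ih =>
    intro X hle hQX hX
    by_cases hXu : X = Set.univ
    · exact hXu ▸ hX
    · obtain ⟨w, hw, hpw⟩ := hstep X hQX hX hXu
      have hX' := extension hX hw hpw
      refine ih (X ∪ {w}) ?_ (hQX.trans Set.subset_union_left) hX'
      have hcompl : (X ∪ {w})ᶜ = Xᶜ \ {w} := by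
        rw [Set.compl_union]
        ext x
        simp [Set.mem_diff]
      rw [hcompl]
      have hwX : w ∈ Xᶜ := hw
      have := Set.ncard_diff_singleton_lt_of_mem hwX (Set.toFinite _)
      omega

end Ext

end M11

/-- Extension proposition together with its iterated consequence: if D is
2-vertex-connected in Q, v ∉ Q admits the required pairs of paths, then D is
2-vertex-connected in Q ∪ {v}; moreover if from any intermediate set a further
vertex with such path pairs can always be found, then D is 2-vertex-connected. -/
theorem stmt_11 {V : Type*} [Finite V] (D : V → V → Prop) (Q : Set V) (v : V)
    (hQ : TwoVCin D Q) (hv : v ∉ Q) (hp : PathPairs D Q v)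
    (hstep : ∀ X : Set V, Q ⊆ X → TwoVCin D X → X ≠ Set.univ →
      ∃ w ∉ X, PathPairs D X w) :
    TwoVCin D (Q ∪ {v}) ∧ TwoVCin D Set.univ := by
  constructor
  · exact M11.extension hQ hv hp
  · exact M11.iterate_univ hstep (Qᶜ.ncard) Q le_rfl (subset_refl Q) hQ
end
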